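/- arXiv:math/0002114 — 6 statements merged into one kernel-verified Lean document; each statement's English description precedes it below -/
import Mathlib

section
/- Let n ∈ ℕ, ε > 0, λ ∈ ℝ with λ ≠ 0, and k ∈ ℝ. Let b : [0,ε) → ℂ be smooth, and define u(x) = e^{iλ/x} x^{(n−1)/2−k} b(x) for x ∈ (0,ε). Then there exists a smooth function c : [0,ε) → ℂ with c(0) = −2iλk·b(0) such that (Pu)(x) − λ²u(x) = e^{iλ/x} x^{(n+1)/2−k} c(x) for all x ∈ (0,ε). (This is the basic conjugation computation (5.1)–(5.2) of the paper: applying H − λ² to an outgoing oscillatory term of order x^{(n−1)/2−k} produces an outgoing term of order x^{(n+1)/2−k} whose leading coefficient is a nonzero multiple of k times the original leading coefficient.) -/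
open Set

private lemma key_osc (lam β : ℝ) (f : ℝ → ℂ) (f' : ℂ) (x : ℝ) (hx : 0 < x)
    (hf : HasDerivAt f f' x) :
    HasDerivAt (fun y : ℝ => Complex.exp (Complex.I * (lam:ℂ) / (y:ℂ)) * ((y ^ β : ℝ) : ℂ) * f y)
      (Complex.exp (Complex.I * (lam:ℂ) / (x:ℂ)) * ((x ^ (β - 2) : ℝ) : ℂ) *
        (-(Complex.I * (lam:ℂ)) * f x + (β:ℂ) * (x:ℂ) * f x + (x:ℂ)^2 * f')) x := by
  have hx0 : (x:ℂ) ≠ 0 := by exact_mod_cast hx.ne'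
  have hinvR : HasDerivAt (fun y : ℝ => lam * y⁻¹) (lam * (-1 / x^2)) x := by
    have := ((hasDerivAt_id x).inv hx.ne').const_mul lam
    simpa using this
  have hE0 := (hinvR.ofReal_comp.mul_const Complex.I).cexp
  have hfun : (fun y : ℝ => Complex.exp (((lam * y⁻¹ : ℝ) : ℂ) * Complex.I))
      = fun y : ℝ => Complex.exp (Complex.I * (lam:ℂ) / (y:ℂ)) := by
    funext y; push_cast; rw [div_eq_mul_inv]; ring_nf
  rw [hfun] at hE0
  have hE : HasDerivAt (fun y : ℝ => Complex.exp (Complex.I * (lam:ℂ) / (y:ℂ)))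
      (Complex.exp (Complex.I * (lam:ℂ) / (x:ℂ)) * (Complex.I * (lam:ℂ) * (-1 / (x:ℂ)^2))) x := by
    convert hE0 using 1
    rw [div_eq_mul_inv]; push_cast; ring
  have hP : HasDerivAt (fun y : ℝ => ((y ^ β : ℝ) : ℂ)) ((β * x ^ (β - 1) : ℝ) : ℂ) x :=
    (Real.hasDerivAt_rpow_const (Or.inl hx.ne')).ofReal_comp
  have := (hE.mul hP).mul hf
  refine this.congr_deriv ?_
  simp only [Pi.mul_apply]
  have e1 : (x:ℝ) ^ β = x ^ (β - 2) * x ^ 2 := by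
    rw [← Real.rpow_natCast x 2, ← Real.rpow_add hx]; norm_num
  have e2 : (x:ℝ) ^ (β - 1) = x ^ (β - 2) * x := by
    rw [show x ^ (β-2) * x = x ^ (β-2) * x ^ (1:ℝ) by rw [Real.rpow_one], ← Real.rpow_add hx]
    congr 1; ring
  rw [e1, e2]
  push_cast
  field_simp

/-- Radial model conjugation computation: applying the radial model operator
`(Pu)(x) = -x⁴u''(x) + (n-3)x³u'(x)` minus `λ²` to the outgoing oscillatory term
`u(x) = e^{iλ/x} x^{(n-1)/2-k} b(x)` produces an outgoing term of order
`x^{(n+1)/2-k}` with leading coefficient `-2iλk·b(0)`. -/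
theorem stmt_0 (n : ℕ) (ε : ℝ) (hε : 0 < ε) (lam : ℝ) (hlam : lam ≠ 0) (k : ℝ)
    (b : ℝ → ℂ) (hb : ContDiffOn ℝ (⊤ : ℕ∞) b (Ico 0 ε))
    (u : ℝ → ℂ)
    (hu : ∀ x ∈ Ioo 0 ε,
      u x = Complex.exp (Complex.I * (lam : ℂ) / (x : ℂ)) *
        ((x ^ (((n : ℝ) - 1) / 2 - k) : ℝ) : ℂ) * b x)
    (Pu : ℝ → ℂ)
    (hPu : ∀ x ∈ Ioo 0 ε,
      Pu x = -(x : ℂ) ^ 4 * deriv (deriv u) x + ((n : ℂ) - 3) * (x : ℂ) ^ 3 * deriv u x) :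
    ∃ c : ℝ → ℂ, ContDiffOn ℝ (⊤ : ℕ∞) c (Ico 0 ε) ∧
      c 0 = -2 * Complex.I * (lam : ℂ) * (k : ℂ) * b 0 ∧
      ∀ x ∈ Ioo 0 ε, Pu x - (lam : ℂ) ^ 2 * u x =
        Complex.exp (Complex.I * (lam : ℂ) / (x : ℂ)) *
          ((x ^ (((n : ℝ) + 1) / 2 - k) : ℝ) : ℂ) * c x := by
  set α : ℝ := ((n : ℝ) - 1) / 2 - k with hα
  set b1 : ℝ → ℂ := derivWithin b (Ico 0 ε) with hb1e
  set b2 : ℝ → ℂ := derivWithin b1 (Ico 0 ε) with hb2e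
  have hud : UniqueDiffOn ℝ (Ico (0:ℝ) ε) := uniqueDiffOn_Ico 0 ε
  have hb1s : ContDiffOn ℝ (⊤ : ℕ∞) b1 (Ico 0 ε) := hb.derivWithin hud (by simp)
  have hb2s : ContDiffOn ℝ (⊤ : ℕ∞) b2 (Ico 0 ε) := hb1s.derivWithin hud (by simp)
  have hmem : ∀ y ∈ Ioo 0 ε, Ico 0 ε ∈ nhds y := fun y hy =>
    Filter.mem_of_superset (isOpen_Ioo.mem_nhds hy) Ioo_subset_Ico_self
  have hbd : ∀ y ∈ Ioo 0 ε, HasDerivAt b (b1 y) y := by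
    intro y hy
    have h2 := ((hb.contDiffAt (hmem y hy)).differentiableAt (by simp)).hasDerivAt
    rw [hb1e, derivWithin_of_mem_nhds (hmem y hy)]
    exact h2
  have hb1d : ∀ y ∈ Ioo 0 ε, HasDerivAt b1 (b2 y) y := by
    intro y hy
    have h2 := ((hb1s.contDiffAt (hmem y hy)).differentiableAt (by simp)).hasDerivAt
    rw [hb2e, derivWithin_of_mem_nhds (hmem y hy)]
    exact h2
  -- the error coefficient
  refine ⟨fun x => Complex.I * (lam:ℂ) * (2*(α:ℂ) - ((n:ℂ)-1)) * b x
    + (x:ℂ) * (2 * Complex.I * (lam:ℂ) * b1 x + (α:ℂ) * ((n:ℂ) - 2 - (α:ℂ)) * b x)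
    + (x:ℂ)^2 * (((n:ℂ) - 3 - 2*(α:ℂ)) * b1 x)
    - (x:ℂ)^3 * b2 x, ?_, ?_, ?_⟩
  · -- smoothness
    have hcast : ContDiffOn ℝ (⊤ : ℕ∞) (fun x : ℝ => (x:ℂ)) (Ico 0 ε) :=
      Complex.ofRealCLM.contDiff.contDiffOn
    exact (((contDiffOn_const.mul hb).add
        (hcast.mul (((contDiffOn_const.mul hb1s)).add (contDiffOn_const.mul hb)))).add
        ((hcast.pow 2).mul (contDiffOn_const.mul hb1s))).sub ((hcast.pow 3).mul hb2s)
  · -- value at 0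
    have h0 : 2*(α:ℂ) - ((n:ℂ)-1) = -2*k := by rw [hα]; push_cast; ring
    simp only [Complex.ofReal_zero, h0]
    ring
  · -- the identity on Ioo
    intro x hx
    have hx1 : 0 < x := hx.1
    -- first derivative of u
    have hderiv1 : ∀ y ∈ Ioo 0 ε, deriv u y =
        Complex.exp (Complex.I * (lam:ℂ) / (y:ℂ)) * ((y ^ (α - 2) : ℝ) : ℂ) *
          (-(Complex.I * (lam:ℂ)) * b y + (α:ℂ) * ((y:ℂ) * b y) + (y:ℂ)^2 * b1 y) := by
      intro y hy
      have heq : u =ᶠ[nhds y] fun z => Complex.exp (Complex.I * (lam:ℂ) / (z:ℂ)) *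
          ((z ^ α : ℝ) : ℂ) * b z :=
        Filter.eventuallyEq_of_mem (isOpen_Ioo.mem_nhds hy) hu
      have hvd := key_osc lam α b (b1 y) y hy.1 (hbd y hy)
      rw [heq.deriv_eq, hvd.deriv]
      ring
    -- second derivative of u at x
    have hid : HasDerivAt (fun y : ℝ => (y:ℂ)) 1 x := by
      have h : HasDerivAt (fun y : ℝ => ((y : ℝ) : ℂ)) ((1:ℝ):ℂ) x :=
        HasDerivAt.ofReal_comp (hasDerivAt_id x)
      exact_mod_cast h
    have hsq : HasDerivAt (fun y : ℝ => ((y:ℂ))^2) (2*(x:ℂ)) x := by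
      have hfun2 : (fun y : ℝ => ((y:ℂ))^2) = fun y : ℝ => (y:ℂ) * (y:ℂ) := by
        funext y; ring
      rw [hfun2]
      have := hid.mul hid
      refine this.congr_deriv ?_
      ring
    have hH : HasDerivAt (fun y : ℝ =>
        -(Complex.I * (lam:ℂ)) * b y + (α:ℂ) * ((y:ℂ) * b y) + (y:ℂ)^2 * b1 y)
        ((-(Complex.I * (lam:ℂ))) * b1 x + (α:ℂ) * (1 * b x + (x:ℂ) * b1 x)
          + (2*(x:ℂ) * b1 x + (x:ℂ)^2 * b2 x)) x :=
      (((hbd x hx).const_mul (-(Complex.I * (lam:ℂ)))).add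
        ((hid.mul (hbd x hx)).const_mul (α:ℂ))).add (hsq.mul (hb1d x hx))
    have hdd2 := key_osc lam (α - 2) _ _ x hx1 hH
    have hev : deriv u =ᶠ[nhds x] fun y =>
        Complex.exp (Complex.I * (lam:ℂ) / (y:ℂ)) * ((y ^ (α - 2) : ℝ) : ℂ) *
          (-(Complex.I * (lam:ℂ)) * b y + (α:ℂ) * ((y:ℂ) * b y) + (y:ℂ)^2 * b1 y) :=
      Filter.eventuallyEq_of_mem (isOpen_Ioo.mem_nhds hx) hderiv1
    have hdd : deriv (deriv u) x =
        Complex.exp (Complex.I * (lam:ℂ) / (x:ℂ)) * ((x ^ (α - 2 - 2) : ℝ) : ℂ) *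
          (-(Complex.I * (lam:ℂ)) *
              (-(Complex.I * (lam:ℂ)) * b x + (α:ℂ) * ((x:ℂ) * b x) + (x:ℂ)^2 * b1 x)
            + ((α - 2 : ℝ):ℂ) * (x:ℂ) *
              (-(Complex.I * (lam:ℂ)) * b x + (α:ℂ) * ((x:ℂ) * b x) + (x:ℂ)^2 * b1 x)
            + (x:ℂ)^2 * ((-(Complex.I * (lam:ℂ))) * b1 x + (α:ℂ) * (1 * b x + (x:ℂ) * b1 x)
              + (2*(x:ℂ) * b1 x + (x:ℂ)^2 * b2 x))) := by
      rw [hev.deriv_eq]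
      exact hdd2.deriv
    -- rpow bookkeeping
    have r1 : ((x ^ α : ℝ) : ℂ) = ((x ^ (α-2-2) : ℝ) : ℂ) * (x:ℂ)^4 := by
      rw [show (x:ℝ) ^ α = x ^ (α-2-2) * x ^ (4:ℕ) by
        rw [← Real.rpow_natCast x 4, ← Real.rpow_add hx1]; congr 1; ring]
      push_cast; ring
    have r2 : ((x ^ (α-2) : ℝ) : ℂ) = ((x ^ (α-2-2) : ℝ) : ℂ) * (x:ℂ)^2 := by
      rw [show (x:ℝ) ^ (α-2) = x ^ (α-2-2) * x ^ (2:ℕ) by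
        rw [← Real.rpow_natCast x 2, ← Real.rpow_add hx1]; congr 1; ring]
      push_cast; ring
    have r3 : ((x ^ (((n:ℝ)+1)/2 - k) : ℝ) : ℂ) = ((x ^ (α-2-2) : ℝ) : ℂ) * (x:ℂ)^5 := by
      rw [show (x:ℝ) ^ (((n:ℝ)+1)/2 - k) = x ^ (α-2-2) * x ^ (5:ℕ) by
        rw [← Real.rpow_natCast x 5, ← Real.rpow_add hx1]
        congr 1; rw [hα]; push_cast; ring]
      push_cast; ring
    rw [hPu x hx, hu x hx, hdd, hderiv1 x hx, r1, r2, r3]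
    push_cast
    linear_combination (-((x:ℂ)^4 * (lam:ℂ)^2 * Complex.exp (Complex.I * (lam:ℂ) / (x:ℂ)) *
      ((x ^ (α-2-2) : ℝ) : ℂ) * b x)) * Complex.I_sq
end

section
/- Let n ∈ ℕ, ε > 0, λ ∈ ℝ with λ ≠ 0, and let k be a positive integer. Let b : [0,ε) → ℂ be smooth and set u(x) = e^{iλ/x} x^{(n−1)/2−k} b(x) for x ∈ (0,ε). Suppose there is a smooth function c : [0,ε) → ℂ such that (Pu)(x) − λ²u(x) = e^{iλ/x} x^{(n+1)/2} c(x) for all x ∈ (0,ε). Then b^{(j)}(0) = 0 for all 0 ≤ j ≤ k−1 (so u = e^{iλ/x} x^{(n−1)/2} b̃(x) with b̃ smooth on [0,ε)), and moreover c(0) = 0, i.e. (Pu) − λ²u = e^{iλ/x} x^{(n+3)/2} c̃ with c̃ smooth on [0,ε). (Radial model of Lemma 4.1, 'one order improvement': if g ∈ e^{iλ/x} x^{(n−1)/2−k} C^∞ satisfies (H−λ²)g ∈ x^{(n+1)/2} e^{iλ/x} C^∞ then (H−λ²)g ∈ x^{(n+3)/2} e^{iλ/x} C^∞.) -/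
open Set Complex Filter Topology

section Aux

lemma mono_vanish (ε : ℝ) :
    ∀ (j m : ℕ), j < m → ∀ (f g : ℝ → ℂ), ContDiffOn ℝ (⊤ : ℕ∞) g (Ico 0 ε) →
      (∀ x ∈ Ico (0:ℝ) ε, f x = (x:ℂ)^m * g x) → (0:ℝ) ∈ Ico (0:ℝ) ε →
      iteratedDerivWithin j f (Ico 0 ε) 0 = 0 := by
  intro j
  induction j with
  | zero =>
    intro m hm f g hg hfg h0
    rw [iteratedDerivWithin_zero, hfg 0 h0]
    rw [show ((0:ℝ):ℂ) = 0 by norm_num, zero_pow (by omega : m ≠ 0), zero_mul]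
  | succ j IH =>
    intro m hm f g hg hfg h0
    obtain ⟨m', rfl⟩ : ∃ m', m = m' + 1 := ⟨m - 1, by omega⟩
    rw [iteratedDerivWithin_succ']
    refine IH m' (by omega) _ (fun x => ((m':ℂ)+1) * g x + (x:ℂ) * derivWithin g (Ico 0 ε) x) ?_ ?_ h0
    · refine ContDiffOn.add (ContDiffOn.mul contDiffOn_const hg) (ContDiffOn.mul ?_ ?_)
      · exact Complex.ofRealCLM.contDiff.contDiffOn
      · exact hg.derivWithin (uniqueDiffOn_Ico 0 ε) (by simp)
    · intro x hx
      have hgd : DifferentiableWithinAt ℝ g (Ico 0 ε) x :=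
        (hg.differentiableOn (by simp)) x hx
      have hud : UniqueDiffWithinAt ℝ (Ico 0 ε) x := uniqueDiffOn_Ico 0 ε x hx
      have h1 : HasDerivWithinAt (fun y : ℝ => ((y:ℂ))^(m'+1) * g y)
          ((((m':ℂ)+1) * (x:ℂ)^m') * g x + (x:ℂ)^(m'+1) * derivWithin g (Ico 0 ε) x)
          (Ico 0 ε) x := by
        have hp : HasDerivAt (fun y : ℝ => ((y:ℂ))^(m'+1)) (((m':ℂ)+1) * (x:ℂ)^m') x := by
          have := (hasDerivAt_pow (m'+1) ((x:ℝ):ℂ)).comp_ofReal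
          simpa using this
        exact hp.hasDerivWithinAt.mul hgd.hasDerivWithinAt
      have : derivWithin f (Ico 0 ε) x
          = (((m':ℂ)+1) * (x:ℂ)^m') * g x + (x:ℂ)^(m'+1) * derivWithin g (Ico 0 ε) x := by
        rw [derivWithin_congr hfg (hfg x hx)]
        exact h1.derivWithin hud
      rw [this]; ring

lemma ind_lemma (ε : ℝ) (hε : 0 < ε) (lam : ℝ) (hlam : lam ≠ 0)
    (gam : ℕ → ℂ) (hgam : ∀ m : ℕ, gam (m+1) = gam m - 2*m)
    (c : ℝ → ℂ) (hc : ContDiffOn ℝ (⊤ : ℕ∞) c (Ico 0 ε)) :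
    ∀ (m : ℕ) (b : ℝ → ℂ), ContDiffOn ℝ (⊤ : ℕ∞) b (Ico 0 ε) →
      (∀ x ∈ Ioo (0:ℝ) ε,
        (-2*I*m*(lam:ℂ)) * b x + 2*I*(lam:ℂ)*(x:ℂ)*derivWithin b (Ico 0 ε) x
          + (2*m-2)*(x:ℂ)^2*derivWithin b (Ico 0 ε) x
          - (x:ℂ)^3 * derivWithin (derivWithin b (Ico 0 ε)) (Ico 0 ε) x
          + gam m * (x:ℂ) * b x = (x:ℂ)^m * c x) →
      c 0 = 0 ∧ ∃ T : ℝ → ℂ, ContDiffOn ℝ (⊤ : ℕ∞) T (Ico 0 ε) ∧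
        ∀ x ∈ Ico (0:ℝ) ε, b x = (x:ℂ)^m * T x := by
  have h0mem : (0:ℝ) ∈ Ico (0:ℝ) ε := ⟨le_refl 0, hε⟩
  have hsub : Ioo (0:ℝ) ε ⊆ Ico 0 ε := Ioo_subset_Ico_self
  have hUD : UniqueDiffOn ℝ (Ico (0:ℝ) ε) := uniqueDiffOn_Ico 0 ε
  have hNB : (𝓝[Ioo (0:ℝ) ε] 0).NeBot := left_nhdsWithin_Ioo_neBot hε
  have key0 : ∀ (f G : ℝ → ℂ), ContinuousWithinAt f (Ico 0 ε) 0 →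
      ContinuousWithinAt G (Ico 0 ε) 0 →
      (∀ x ∈ Ioo (0:ℝ) ε, f x = (x:ℂ) * G x) → f 0 = 0 := by
    intro f G hf hG hfG
    have h1 : Filter.Tendsto f (𝓝[Ioo (0:ℝ) ε] 0) (𝓝 (f 0)) :=
      hf.tendsto.mono_left (nhdsWithin_mono _ hsub)
    have h2 : Filter.Tendsto (fun x : ℝ => (x:ℂ) * G x) (𝓝[Ioo (0:ℝ) ε] 0)
        (𝓝 (((0:ℝ):ℂ) * G 0)) := by
      refine Filter.Tendsto.mul ?_ (hG.tendsto.mono_left (nhdsWithin_mono _ hsub))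
      exact (Complex.continuous_ofReal.tendsto 0).mono_left nhdsWithin_le_nhds
    have h3 : Filter.Tendsto f (𝓝[Ioo (0:ℝ) ε] 0) (𝓝 (((0:ℝ):ℂ) * G 0)) :=
      h2.congr' (by filter_upwards [self_mem_nhdsWithin] with x hx using (hfG x hx).symm)
    have := tendsto_nhds_unique h1 h3
    simpa using this
  intro m
  induction m with
  | zero =>
    intro b hb hid
    set B1 := derivWithin b (Ico 0 ε) with hB1
    set B2 := derivWithin B1 (Ico 0 ε) with hB2
    have hB1s : ContDiffOn ℝ (⊤ : ℕ∞) B1 (Ico 0 ε) := hb.derivWithin hUD (by simp)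
    have hB2s : ContDiffOn ℝ (⊤ : ℕ∞) B2 (Ico 0 ε) := hB1s.derivWithin hUD (by simp)
    constructor
    · refine key0 c (fun x => 2*I*(lam:ℂ)*B1 x - 2*(x:ℂ)*B1 x - (x:ℂ)^2*B2 x + gam 0 * b x)
        (hc.continuousOn 0 h0mem) ?_ ?_
      · exact ContinuousWithinAt.add (ContinuousWithinAt.sub
          (ContinuousWithinAt.sub (continuousWithinAt_const.mul (hB1s.continuousOn 0 h0mem))
            ((continuous_const.mul Complex.continuous_ofReal).continuousWithinAt.mul
              (hB1s.continuousOn 0 h0mem)))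
          (((Complex.continuous_ofReal.pow 2).continuousWithinAt).mul
            (hB2s.continuousOn 0 h0mem)))
          (continuousWithinAt_const.mul (hb.continuousOn 0 h0mem))
      · intro x hx
        have := hid x hx
        push_cast at this ⊢
        linear_combination -this
    · exact ⟨b, hb, fun x _ => by simp⟩
  | succ m IH =>
    intro b hb hid
    set s := Ico (0:ℝ) ε with hs
    set B1 := derivWithin b s with hB1
    set B2 := derivWithin B1 s with hB2
    have hB1s : ContDiffOn ℝ (⊤ : ℕ∞) B1 s := hb.derivWithin hUD (by simp)
    have hB2s : ContDiffOn ℝ (⊤ : ℕ∞) B2 s := hB1s.derivWithin hUD (by simp)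
    have hm1 : ((m:ℂ)+1) ≠ 0 := Nat.cast_add_one_ne_zero m
    have hden : (2*I*((m:ℂ)+1)*(lam:ℂ)) ≠ 0 :=
      mul_ne_zero (mul_ne_zero (mul_ne_zero two_ne_zero Complex.I_ne_zero) hm1)
        (Complex.ofReal_ne_zero.mpr hlam)
    set S : ℝ → ℂ := fun x => (-(x:ℂ)^m * c x + 2*I*(lam:ℂ)*B1 x + 2*m*(x:ℂ)*B1 x
        - (x:ℂ)^2*B2 x + gam (m+1) * b x) / (2*I*((m:ℂ)+1)*(lam:ℂ)) with hSdef
    have hSs : ContDiffOn ℝ (⊤ : ℕ∞) S s := by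
      refine ContDiffOn.div_const ?_ _
      have hx : ContDiffOn ℝ (⊤ : ℕ∞) (fun x : ℝ => (x:ℂ)) s := Complex.ofRealCLM.contDiff.contDiffOn
      exact ((((((hx.pow m).neg).mul hc).add
        ((contDiffOn_const (c := 2*I*(lam:ℂ))).mul hB1s)).add
        (((contDiffOn_const (c := 2*(m:ℂ))).mul hx).mul hB1s)).sub
        ((hx.pow 2).mul hB2s)).add ((contDiffOn_const (c := gam (m+1))).mul hb)
    have hbS : ∀ x ∈ Ioo (0:ℝ) ε, b x = (x:ℂ) * S x := by
      intro x hx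
      have h := hid x hx
      rw [hSdef]
      beta_reduce
      rw [mul_div_assoc', eq_div_iff hden]
      push_cast at h ⊢
      linear_combination -h
    have hb0 : b 0 = 0 :=
      key0 b S (hb.continuousOn 0 h0mem) (hSs.continuousOn 0 h0mem) hbS
    have hbS' : ∀ x ∈ s, b x = (x:ℂ) * S x := by
      intro x hx
      rcases eq_or_lt_of_le hx.1 with h | h
      · rw [← h]; simpa using hb0
      · exact hbS x ⟨h, hx.2⟩
    have hidS : ∀ x ∈ Ioo (0:ℝ) ε,
        (-2*I*m*(lam:ℂ)) * S x + 2*I*(lam:ℂ)*(x:ℂ)*derivWithin S s x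
          + (2*m-2)*(x:ℂ)^2*derivWithin S s x
          - (x:ℂ)^3 * derivWithin (derivWithin S s) s x
          + gam m * (x:ℂ) * S x = (x:ℂ)^m * c x := by
      have hmem : ∀ x ∈ Ioo (0:ℝ) ε, s ∈ 𝓝 x := fun x hx =>
        Filter.mem_of_superset (isOpen_Ioo.mem_nhds hx) hsub
      set S1 := derivWithin S s with hS1
      set S2 := derivWithin S1 s with hS2
      have hS1s : ContDiffOn ℝ (⊤ : ℕ∞) S1 s := hSs.derivWithin hUD (by simp)
      have hS1at : ∀ x ∈ Ioo (0:ℝ) ε, HasDerivAt S (S1 x) x := by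
        intro x hx
        have hd : DifferentiableAt ℝ S x :=
          (hSs.contDiffAt (hmem x hx)).differentiableAt (by simp)
        rw [hS1, derivWithin_of_mem_nhds (hmem x hx)]
        exact hd.hasDerivAt
      have hS2at : ∀ x ∈ Ioo (0:ℝ) ε, HasDerivAt S1 (S2 x) x := by
        intro x hx
        have hd : DifferentiableAt ℝ S1 x :=
          (hS1s.contDiffAt (hmem x hx)).differentiableAt (by simp)
        rw [hS2, derivWithin_of_mem_nhds (hmem x hx)]
        exact hd.hasDerivAt
      have hbat : ∀ x ∈ Ioo (0:ℝ) ε, HasDerivAt b (S x + (x:ℂ) * S1 x) x := by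
        intro x hx
        have h1 : HasDerivAt (fun y : ℝ => (y:ℂ) * S y) (1 * S x + (x:ℂ) * S1 x) x :=
          (Complex.ofRealCLM.hasDerivAt (x := x)).mul (hS1at x hx)
        rw [one_mul] at h1
        refine h1.congr_of_eventuallyEq ?_
        filter_upwards [hmem x hx] with y hy using (hbS' y hy)
      have hB1eq : ∀ x ∈ Ioo (0:ℝ) ε, B1 x = S x + (x:ℂ) * S1 x := by
        intro x hx
        rw [hB1, derivWithin_of_mem_nhds (hmem x hx)]
        exact (hbat x hx).deriv
      have hB2eq : ∀ x ∈ Ioo (0:ℝ) ε, B2 x = 2 * S1 x + (x:ℂ) * S2 x := by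
        intro x hx
        rw [hB2, derivWithin_of_mem_nhds (hmem x hx)]
        have h1 : HasDerivAt (fun y : ℝ => S y + (y:ℂ) * S1 y)
            (S1 x + (1 * S1 x + (x:ℂ) * S2 x)) x :=
          (hS1at x hx).add ((Complex.ofRealCLM.hasDerivAt (x := x)).mul (hS2at x hx))
        have h2 : HasDerivAt B1 (S1 x + (1 * S1 x + (x:ℂ) * S2 x)) x := by
          refine h1.congr_of_eventuallyEq ?_
          filter_upwards [isOpen_Ioo.mem_nhds hx] with y hy using (hB1eq y hy)
        rw [h2.deriv]; ring
      intro x hx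
      have hx0 : ((x:ℝ):ℂ) ≠ 0 := by
        exact_mod_cast ne_of_gt (show (0:ℝ) < x from hx.1)
      have h := hid x hx
      rw [hbS' x (hsub hx), hB1eq x hx, hB2eq x hx, hgam m] at h
      refine mul_left_cancel₀ hx0 ?_
      push_cast at h ⊢
      linear_combination h
    obtain ⟨hc0, T, hT, hbT⟩ := IH S hSs hidS
    refine ⟨hc0, T, hT, fun x hx => ?_⟩
    rw [hbS' x hx, hbT x hx]
    ring

lemma alg_lemma (X Ex A4 L al N K XK b0 b1 b2 c0 : ℂ)
    (hX : X ≠ 0) (hA4 : A4 ≠ 0) (hEx : Ex ≠ 0)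
    (hal : al = ((N:ℂ)-1)/2 - K)
    (hEQ : -(X^4) * (Ex * A4 * ((-(I*L)) * ((al*X - I*L)*b0 + X^2*b1)
              + (al-2)*X*((al*X - I*L)*b0 + X^2*b1)
              + X^2*(al*b0 + (al*X - I*L + 2*X)*b1 + X^2*b2)))
          + (N-3) * X^3 * (Ex * (A4*X^2) * ((al*X - I*L)*b0 + X^2*b1))
          - L^2 * (Ex * (A4*X^4) * b0)
        = Ex * (A4 * X^5 * XK) * c0) :
    (-2*I*K*L) * b0 + 2*I*L*X*b1 + (2*K-2)*X^2*b1 - X^3*b2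
      + ((((N:ℂ)-1)/2 - K) * (((N:ℂ)-3)/2 + K)) * X * b0 = XK * c0 := by
  subst hal
  have h5 : Ex * A4 * X^5 ≠ 0 :=
    mul_ne_zero (mul_ne_zero hEx hA4) (pow_ne_zero 5 hX)
  apply mul_left_cancel₀ h5
  linear_combination hEQ + (Ex * A4 * X^4 * L^2 * b0) * Complex.I_sq

end Aux

/-- Radial model of Lemma 4.1 ('one order improvement'): if
`u = e^{iλ/x} x^{(n-1)/2-k} b(x)` with `b` smooth on `[0,ε)` and `k ≥ 1` an integer,
and `(P - λ²)u = e^{iλ/x} x^{(n+1)/2} c(x)` with `c` smooth on `[0,ε)`, then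
`b⁽ʲ⁾(0) = 0` for `0 ≤ j ≤ k-1` and moreover `c(0) = 0`, i.e.
`(P - λ²)u ∈ e^{iλ/x} x^{(n+3)/2} C^∞([0,ε))`. -/
theorem stmt_1 (n : ℕ) (ε : ℝ) (hε : 0 < ε) (lam : ℝ) (hlam : lam ≠ 0)
    (k : ℕ) (hk : 1 ≤ k)
    (b : ℝ → ℂ) (hb : ContDiffOn ℝ (⊤ : ℕ∞) b (Ico 0 ε))
    (u : ℝ → ℂ)
    (hu : ∀ x ∈ Ioo 0 ε,
      u x = Complex.exp (Complex.I * (lam : ℂ) / (x : ℂ)) *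
        ((x ^ (((n : ℝ) - 1) / 2 - (k : ℝ)) : ℝ) : ℂ) * b x)
    (Pu : ℝ → ℂ)
    (hPu : ∀ x ∈ Ioo 0 ε,
      Pu x = -(x : ℂ) ^ 4 * deriv (deriv u) x + ((n : ℂ) - 3) * (x : ℂ) ^ 3 * deriv u x)
    (c : ℝ → ℂ) (hc : ContDiffOn ℝ (⊤ : ℕ∞) c (Ico 0 ε))
    (heq : ∀ x ∈ Ioo 0 ε, Pu x - (lam : ℂ) ^ 2 * u x =
      Complex.exp (Complex.I * (lam : ℂ) / (x : ℂ)) *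
        ((x ^ (((n : ℝ) + 1) / 2) : ℝ) : ℂ) * c x) :
    (∀ j : ℕ, j ≤ k - 1 → iteratedDerivWithin j b (Ico 0 ε) 0 = 0) ∧ c 0 = 0 := by
  have hsub : Ioo (0:ℝ) ε ⊆ Ico 0 ε := Ioo_subset_Ico_self
  set al : ℝ := ((n : ℝ) - 1) / 2 - (k : ℝ) with hal
  set E : ℝ → ℂ := fun y => Complex.exp (Complex.I * (lam : ℂ) / (y : ℂ)) with hE_def
  -- rpow splitting helper
  have hpow : ∀ (β : ℝ) (j : ℕ) (y : ℝ), 0 < y →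
      ((y ^ (β + (j:ℝ)) : ℝ) : ℂ) = ((y ^ β : ℝ) : ℂ) * (y:ℂ)^j := by
    intro β j y hy
    rw [Real.rpow_add hy, Real.rpow_natCast]
    push_cast
    ring
  -- derivative of E
  have hEat : ∀ y : ℝ, 0 < y → HasDerivAt E (E y * (-(Complex.I*(lam:ℂ)) / (y:ℂ)^2)) y := by
    intro y hy
    have hyC : (y:ℂ) ≠ 0 := by exact_mod_cast hy.ne'
    have h0 := (((hasDerivAt_inv hyC).const_mul (Complex.I*(lam:ℂ))).cexp).comp_ofReal
    have h1 : HasDerivAt E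
        (Complex.exp (Complex.I*(lam:ℂ) * ((y:ℂ))⁻¹) * (Complex.I*(lam:ℂ) * -(((y:ℂ))^2)⁻¹)) y := by
      refine h0.congr_of_eventuallyEq ?_
      filter_upwards with t
      simp only [hE_def, div_eq_mul_inv]
    have h2 : Complex.exp (Complex.I*(lam:ℂ) * ((y:ℂ))⁻¹) * (Complex.I*(lam:ℂ) * -(((y:ℂ))^2)⁻¹)
        = E y * (-(Complex.I*(lam:ℂ)) / (y:ℂ)^2) := by
      simp only [hE_def, div_eq_mul_inv]
      ring
    exact h2 ▸ h1
  -- derivative of rpow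
  have hA : ∀ (β : ℝ) (y : ℝ), 0 < y →
      HasDerivAt (fun t : ℝ => ((t ^ β : ℝ) : ℂ)) ((β:ℂ) * ((y ^ (β-1) : ℝ):ℂ)) y := by
    intro β y hy
    have := (Real.hasDerivAt_rpow_const (x := y) (p := β) (Or.inl hy.ne')).ofReal_comp
    simpa [Complex.ofReal_mul] using this
  -- b is differentiable on Ioo with smooth derivative
  have hbo : ContDiffOn ℝ (⊤ : ℕ∞) b (Ioo 0 ε) := hb.mono hsub
  have hb1o : ContDiffOn ℝ (⊤ : ℕ∞) (deriv b) (Ioo 0 ε) := hbo.deriv_of_isOpen isOpen_Ioo (by simp)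
  have hbD : ∀ y ∈ Ioo (0:ℝ) ε, HasDerivAt b (deriv b y) y := fun y hy =>
    ((hbo.differentiableOn (by simp)).differentiableAt (isOpen_Ioo.mem_nhds hy)).hasDerivAt
  have hbD2 : ∀ y ∈ Ioo (0:ℝ) ε, HasDerivAt (deriv b) (deriv (deriv b) y) y := fun y hy =>
    ((hb1o.differentiableOn (by simp)).differentiableAt (isOpen_Ioo.mem_nhds hy)).hasDerivAt
  set P1 : ℝ → ℂ := fun y => ((al:ℂ)*(y:ℂ) - Complex.I*(lam:ℂ)) * b y + (y:ℂ)^2 * deriv b y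
    with hP1_def
  set A2f : ℝ → ℂ := fun t => ((t ^ (al-2) : ℝ) : ℂ) with hA2f_def
  set D1 : ℝ → ℂ := fun y => E y * A2f y * P1 y with hD1_def
  -- first derivative of u
  have hD1at : ∀ y ∈ Ioo (0:ℝ) ε, HasDerivAt u (D1 y) y := by
    intro y hy
    have hy0 : 0 < y := hy.1
    have hyC : (y:ℂ) ≠ 0 := by exact_mod_cast hy0.ne'
    have hprod := ((hEat y hy0).mul (hA al y hy0)).mul (hbD y hy)
    have hueq : u =ᶠ[𝓝 y] fun t => E t * ((t ^ al : ℝ) : ℂ) * b t := by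
      filter_upwards [isOpen_Ioo.mem_nhds hy] with t ht using hu t ht
    have h1 := hprod.congr_of_eventuallyEq hueq
    have hr1 : ((y ^ al : ℝ) : ℂ) = A2f y * (y:ℂ)^2 := by
      have h := hpow (al-2) 2 y hy0
      rw [show al - 2 + ((2:ℕ):ℝ) = al by push_cast; ring] at h
      simpa [hA2f_def] using h
    have hr2 : ((y ^ (al-1) : ℝ) : ℂ) = A2f y * (y:ℂ) := by
      have h := hpow (al-2) 1 y hy0
      rw [show al - 2 + ((1:ℕ):ℝ) = al - 1 by push_cast; ring] at h
      simpa [hA2f_def] using h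
    have hval : (E y * (-(Complex.I*(lam:ℂ)) / (y:ℂ)^2) * ((y ^ al : ℝ) : ℂ)
          + E y * ((al:ℂ) * ((y ^ (al-1) : ℝ):ℂ))) * b y
          + E y * ((y ^ al : ℝ) : ℂ) * deriv b y = D1 y := by
      rw [hr1, hr2, hD1_def, hP1_def]
      field_simp
      ring
    exact hval ▸ h1
  have hderiv1 : ∀ y ∈ Ioo (0:ℝ) ε, deriv u y = D1 y := fun y hy => (hD1at y hy).deriv
  -- the key identity
  have hkey : ∀ x ∈ Ioo (0:ℝ) ε,
      (-2*I*(k:ℕ)*(lam:ℂ)) * b x + 2*I*(lam:ℂ)*(x:ℂ)*derivWithin b (Ico 0 ε) x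
        + (2*(k:ℕ)-2)*(x:ℂ)^2*derivWithin b (Ico 0 ε) x
        - (x:ℂ)^3 * derivWithin (derivWithin b (Ico 0 ε)) (Ico 0 ε) x
        + ((((n:ℂ)-1)/2 - (k:ℕ)) * (((n:ℂ)-3)/2 + (k:ℕ))) * (x:ℂ) * b x
        = (x:ℂ)^(k:ℕ) * c x := by
    intro x hx
    have hx0 : 0 < x := hx.1
    have hxC : (x:ℂ) ≠ 0 := by exact_mod_cast hx0.ne'
    have hmem : Ico (0:ℝ) ε ∈ 𝓝 x := Filter.mem_of_superset (isOpen_Ioo.mem_nhds hx) hsub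
    have hIoo : Ioo (0:ℝ) ε ∈ 𝓝 x := isOpen_Ioo.mem_nhds hx
    set X : ℂ := (x:ℂ) with hX_def
    set A4 : ℂ := ((x ^ (al-4) : ℝ) : ℂ) with hA4_def
    have hA4ne : A4 ≠ 0 := by
      rw [hA4_def]
      exact_mod_cast (Real.rpow_pos_of_pos hx0 (al-4)).ne'
    have hEne : E x ≠ 0 := Complex.exp_ne_zero _
    -- second derivative value
    have hidC : HasDerivAt (fun t : ℝ => (t:ℂ)) 1 x := by
      simpa using (hasDerivAt_id x).ofReal_comp
    have hP1at : HasDerivAt P1 (((al:ℂ)) * b x + ((al:ℂ)*X - Complex.I*(lam:ℂ)) * deriv b x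
        + (2*X * deriv b x + X^2 * deriv (deriv b) x)) x := by
      have h1 : HasDerivAt (fun y : ℝ => (al:ℂ)*(y:ℂ) - Complex.I*(lam:ℂ)) ((al:ℂ)) x := by
        simpa using (hidC.const_mul (al:ℂ)).sub_const (Complex.I*(lam:ℂ))
      have h2 : HasDerivAt (fun y : ℝ => ((y:ℂ))^2) (2*X) x := by
        have h := hidC.mul hidC
        simp only [mul_one, one_mul] at h
        have h' : HasDerivAt (fun y : ℝ => ((y:ℂ)) * (y:ℂ)) (2*X) x := by
          exact h.congr_deriv (by ring)
        refine h'.congr_of_eventuallyEq ?_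
        filter_upwards with t
        ring
      have h3 := (h1.mul (hbD x hx)).add (h2.mul (hbD2 x hx))
      rw [hP1_def]
      exact h3
    have hA2at : HasDerivAt A2f (((al:ℂ)-2) * ((x ^ (al-2-1) : ℝ):ℂ)) x := by
      rw [hA2f_def]
      have := hA (al-2) x hx0
      simpa using this
    have hD1at' := ((hEat x hx0).mul hA2at).mul hP1at
    have hr3 : A2f x = A4 * X^2 := by
      have h := hpow (al-4) 2 x hx0
      rw [show al - 4 + ((2:ℕ):ℝ) = al - 2 by push_cast; ring] at h
      simpa [hA2f_def, hA4_def] using h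
    have hr4 : ((x ^ (al-2-1) : ℝ):ℂ) = A4 * X := by
      have h := hpow (al-4) 1 x hx0
      rw [show al - 4 + ((1:ℕ):ℝ) = al - 2 - 1 by push_cast; ring] at h
      simpa [hA4_def] using h
    set b0 : ℂ := b x
    set b1 : ℂ := deriv b x
    set b2 : ℂ := deriv (deriv b) x
    have hWval : (E x * (-(Complex.I*(lam:ℂ)) / (x:ℂ)^2) * A2f x
          + E x * (((al:ℂ)-2) * ((x ^ (al-2-1) : ℝ):ℂ))) * P1 x
          + E x * A2f x * (((al:ℂ)) * b0 + ((al:ℂ)*X - Complex.I*(lam:ℂ)) * b1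
            + (2*X * b1 + X^2 * b2))
        = E x * A4 * ((-(I*(lam:ℂ))) * (((al:ℂ)*X - I*(lam:ℂ))*b0 + X^2*b1)
              + ((al:ℂ)-2)*X*(((al:ℂ)*X - I*(lam:ℂ))*b0 + X^2*b1)
              + X^2*((al:ℂ)*b0 + ((al:ℂ)*X - I*(lam:ℂ) + 2*X)*b1 + X^2*b2)) := by
      rw [hr3, hr4, hP1_def]
      simp only [← hX_def]
      field_simp
      ring
    have hd2x : deriv (deriv u) x
        = E x * A4 * ((-(I*(lam:ℂ))) * (((al:ℂ)*X - I*(lam:ℂ))*b0 + X^2*b1)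
              + ((al:ℂ)-2)*X*(((al:ℂ)*X - I*(lam:ℂ))*b0 + X^2*b1)
              + X^2*((al:ℂ)*b0 + ((al:ℂ)*X - I*(lam:ℂ) + 2*X)*b1 + X^2*b2)) := by
      have hev : deriv u =ᶠ[𝓝 x] D1 := by
        filter_upwards [hIoo] with y hy using hderiv1 y hy
      have h1 : HasDerivAt (deriv u) _ x := (hWval ▸ hD1at').congr_of_eventuallyEq hev
      exact h1.deriv
    -- assemble the equation
    have hEQ := heq x hx
    rw [hPu x hx, hd2x, hderiv1 x hx, hu x hx] at hEQ
    have hr5 : ((x ^ al : ℝ) : ℂ) = A4 * X^4 := by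
      have h := hpow (al-4) 4 x hx0
      rw [show al - 4 + ((4:ℕ):ℝ) = al by push_cast; ring] at h
      simpa [hA4_def] using h
    have hr6 : ((x ^ (((n:ℝ)+1)/2) : ℝ) : ℂ) = A4 * X^5 * X^(k:ℕ) := by
      have h := hpow (al-4) (5+k) x hx0
      rw [show al - 4 + ((5+k:ℕ):ℝ) = ((n:ℝ)+1)/2 by rw [hal]; push_cast; ring, pow_add] at h
      rw [h, hA4_def]
      ring
    rw [hr5, hr6, hD1_def] at hEQ
    simp only [hr3, hP1_def] at hEQ
    -- conversions to derivWithin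
    have hBW1 : ∀ y ∈ Ioo (0:ℝ) ε, derivWithin b (Ico 0 ε) y = deriv b y := fun y hy =>
      derivWithin_of_mem_nhds (Filter.mem_of_superset (isOpen_Ioo.mem_nhds hy) hsub)
    have hBW2 : derivWithin (derivWithin b (Ico 0 ε)) (Ico 0 ε) x = deriv (deriv b) x := by
      rw [derivWithin_of_mem_nhds hmem]
      apply Filter.EventuallyEq.deriv_eq
      filter_upwards [hIoo] with y hy using hBW1 y hy
    rw [hBW1 x hx, hBW2]
    have halC : ((al:ℝ):ℂ) = (((n:ℕ):ℂ)-1)/2 - ((k:ℕ):ℂ) := by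
      rw [hal]; push_cast; ring
    exact alg_lemma X (E x) A4 (lam:ℂ) ((al:ℝ):ℂ) ((n:ℕ):ℂ) ((k:ℕ):ℂ) (X^(k:ℕ))
      b0 b1 b2 (c x) hxC hA4ne hEne halC (by linear_combination hEQ)
  obtain ⟨hc0, T, hT, hbT⟩ := ind_lemma ε hε lam hlam
    (fun m : ℕ => (((n:ℂ)-1)/2 - (m:ℂ)) * (((n:ℂ)-3)/2 + (m:ℂ)))
    (by intro m; push_cast; ring) c hc k b hb hkey
  refine ⟨fun j hj => mono_vanish ε j k (by omega) b T hT hbT ⟨le_refl 0, hε⟩, hc0⟩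
end

section
/- Let n ∈ ℕ, ε > 0, λ ∈ ℝ with λ ≠ 0, and let g : [0,ε) → ℂ be smooth with g(0) = 0. Set u(x) = e^{iλ/x} x^{(n−1)/2} g(x) for x ∈ (0,ε), and suppose that (Pu)(x) − λ²u(x) = 0 for all x ∈ (0,ε). Then g vanishes to infinite order at 0, i.e. g^{(j)}(0) = 0 for every j ∈ ℕ. (Radial model of the step in the proof of the density Lemma 6.1: an outgoing/incoming solution of (H−λ²)h = 0 whose leading boundary coefficient vanishes has identically vanishing asymptotic expansion at the boundary.) -/
open Set Filter

lemma hfact_aux (x w g0 g1 g2 mc L : ℂ) (hx : x ≠ 0) :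
    -x^4 * (w * ((mc*x - Complex.I*L)/x^2) * (((mc*x - Complex.I*L)/x^2)*g0 + g1)
      + w * (((2*Complex.I*L - mc*x)/x^3)*g0 + ((mc*x - Complex.I*L)/x^2)*g1 + g2))
    + (2*mc+1-3)*x^3*(w*(((mc*x - Complex.I*L)/x^2)*g0 + g1)) - L^2*(w*g0)
    = -w*x^2*(x^2*g2 + 2*x*g1 - (mc*(mc-1))*g0 - 2*Complex.I*L*g1) := by
  field_simp
  ring_nf
  simp only [Complex.I_sq]
  ring

lemma aux_rec (ε : ℝ) (hε : 0 < ε) (c lam2 : ℂ) (hlam2 : lam2 ≠ 0) (G : ℕ → ℝ → ℂ)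
    (hcont : ∀ j, ContinuousWithinAt (G j) (Ico 0 ε) 0)
    (hGd : ∀ j x, x ∈ Ioo 0 ε → HasDerivAt (G j) (G (j+1) x) x)
    (hkey : ∀ x ∈ Ioo 0 ε, lam2 * G 1 x = (x:ℂ)^2 * G 2 x + 2*(x:ℂ)*G 1 x - c * G 0 x)
    (h0 : G 0 0 = 0) : ∀ j, G j 0 = 0 := by
  have Q : ∀ j, ∀ x ∈ Ioo (0:ℝ) ε,
      lam2 * G (j+1) x = (x:ℂ)^2 * G (j+2) x + (2*(j:ℂ)+2)*(x:ℂ)*G (j+1) x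
        + ((j:ℂ)*((j:ℂ)+1) - c) * G j x := by
    intro j
    induction j with
    | zero =>
      intro x hx
      have := hkey x hx
      push_cast
      linear_combination this
    | succ j ih =>
      intro x hx
      have h1 : HasDerivAt (fun t : ℝ => (t:ℂ)) 1 x := by
        simpa using (hasDerivAt_id x).ofReal_comp
      have hsq : HasDerivAt (fun t : ℝ => ((t:ℂ))^2) (2*(x:ℂ)) x := by
        have h2 := h1.fun_mul h1
        simp only [pow_two]
        exact h2.congr_deriv (by ring)
      have hL : HasDerivAt (fun y : ℝ => lam2 * G (j+1) y) (lam2 * G (j+2) x) x :=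
        (hGd (j+1) x hx).const_mul _
      have hR1 : HasDerivAt (fun y : ℝ => (y:ℂ)^2 * G (j+2) y)
          (2*(x:ℂ)*G (j+2) x + (x:ℂ)^2*G (j+3) x) x := hsq.mul (hGd (j+2) x hx)
      have hR2 : HasDerivAt (fun y : ℝ => (2*(j:ℂ)+2)*(y:ℂ)*G (j+1) y)
          ((2*(j:ℂ)+2)*G (j+1) x + (2*(j:ℂ)+2)*(x:ℂ)*G (j+2) x) x := by
        have := ((h1.const_mul (2*(j:ℂ)+2)).fun_mul (hGd (j+1) x hx))
        simpa [mul_assoc] using this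
      have hR3 : HasDerivAt (fun y : ℝ => ((j:ℂ)*((j:ℂ)+1) - c) * G j y)
          (((j:ℂ)*((j:ℂ)+1) - c) * G (j+1) x) x := (hGd j x hx).const_mul _
      have hF : HasDerivAt (fun y : ℝ => lam2 * G (j+1) y -
          ((y:ℂ)^2 * G (j+2) y + (2*(j:ℂ)+2)*(y:ℂ)*G (j+1) y + ((j:ℂ)*((j:ℂ)+1) - c) * G j y))
          (lam2 * G (j+2) x - (2*(x:ℂ)*G (j+2) x + (x:ℂ)^2*G (j+3) x
            + ((2*(j:ℂ)+2)*G (j+1) x + (2*(j:ℂ)+2)*(x:ℂ)*G (j+2) x)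
            + ((j:ℂ)*((j:ℂ)+1) - c) * G (j+1) x)) x := hL.sub ((hR1.add hR2).add hR3)
      have hzero : HasDerivAt (fun y : ℝ => lam2 * G (j+1) y -
          ((y:ℂ)^2 * G (j+2) y + (2*(j:ℂ)+2)*(y:ℂ)*G (j+1) y + ((j:ℂ)*((j:ℂ)+1) - c) * G j y))
          0 x := by
        apply (hasDerivAt_const x (0:ℂ)).congr_of_eventuallyEq
        filter_upwards [isOpen_Ioo.mem_nhds hx] with y hy
        rw [ih y hy]; ring
      have huniq := hF.unique hzero
      push_cast
      linear_combination huniq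
  have hne : (nhdsWithin (0:ℝ) (Ioo 0 ε)).NeBot := by
    rw [← mem_closure_iff_nhdsWithin_neBot, closure_Ioo hε.ne]
    exact ⟨le_refl 0, hε.le⟩
  have tG : ∀ k, Tendsto (G k) (nhdsWithin 0 (Ioo 0 ε)) (nhds (G k 0)) := fun k =>
    (hcont k).mono_left (nhdsWithin_mono _ Ioo_subset_Ico_self)
  have tx : Tendsto (fun x : ℝ => (x:ℂ)) (nhdsWithin 0 (Ioo 0 ε)) (nhds 0) := by
    have : Tendsto (fun x : ℝ => (x:ℂ)) (nhds 0) (nhds ((0:ℝ):ℂ)) :=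
      Complex.continuous_ofReal.tendsto 0
    simpa using this.mono_left nhdsWithin_le_nhds
  have step : ∀ j, G j 0 = 0 → G (j+1) 0 = 0 := by
    intro j hj
    have t1 : Tendsto (fun x : ℝ => lam2 * G (j+1) x) (nhdsWithin 0 (Ioo 0 ε))
        (nhds (lam2 * G (j+1) 0)) := (tG (j+1)).const_mul _
    have t2 : Tendsto (fun x : ℝ => (x:ℂ)^2 * G (j+2) x + (2*(j:ℂ)+2)*(x:ℂ)*G (j+1) x
        + ((j:ℂ)*((j:ℂ)+1) - c) * G j x) (nhdsWithin 0 (Ioo 0 ε)) (nhds 0) := by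
      have := (((tx.pow 2).mul (tG (j+2))).add (((tx.const_mul (2*(j:ℂ)+2)).mul (tG (j+1))))).add
        ((tG j).const_mul ((j:ℂ)*((j:ℂ)+1) - c))
      simpa [hj] using this
    have t1' : Tendsto (fun x : ℝ => lam2 * G (j+1) x) (nhdsWithin 0 (Ioo 0 ε)) (nhds 0) := by
      apply t2.congr'
      filter_upwards [self_mem_nhdsWithin] with x hx
      exact (Q j x hx).symm
    have := tendsto_nhds_unique t1 t1'
    exact (mul_eq_zero.mp this).resolve_left hlam2
  intro j
  induction j with
  | zero => exact h0
  | succ j ih => exact step j ih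

/-- Radial model of the step in the proof of the density Lemma 6.1: if
`u = e^{iλ/x} x^{(n-1)/2} g(x)` with `g` smooth on `[0,ε)`, `g(0) = 0`, and
`(P - λ²)u = 0` on `(0,ε)`, then `g` vanishes to infinite order at `0`. -/
theorem stmt_2 (n : ℕ) (ε : ℝ) (hε : 0 < ε) (lam : ℝ) (hlam : lam ≠ 0)
    (g : ℝ → ℂ) (hg : ContDiffOn ℝ (⊤ : ℕ∞) g (Ico 0 ε)) (hg0 : g 0 = 0)
    (u : ℝ → ℂ)
    (hu : ∀ x ∈ Ioo 0 ε,
      u x = Complex.exp (Complex.I * (lam : ℂ) / (x : ℂ)) *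
        ((x ^ (((n : ℝ) - 1) / 2) : ℝ) : ℂ) * g x)
    (heq : ∀ x ∈ Ioo 0 ε,
      -(x : ℂ) ^ 4 * deriv (deriv u) x + ((n : ℂ) - 3) * (x : ℂ) ^ 3 * deriv u x
        - (lam : ℂ) ^ 2 * u x = 0) :
    ∀ j : ℕ, iteratedDerivWithin j g (Ico 0 ε) 0 = 0 := by
  set m : ℝ := ((n : ℝ) - 1) / 2 with hm
  have hUD : UniqueDiffOn ℝ (Ico (0:ℝ) ε) := uniqueDiffOn_Ico 0 ε
  set G : ℕ → ℝ → ℂ := fun j => iteratedDerivWithin j g (Ico 0 ε) with hGdef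
  have hG0 : G 0 = g := iteratedDerivWithin_zero
  have hGd : ∀ j x, x ∈ Ioo (0:ℝ) ε → HasDerivAt (G j) (G (j+1) x) x := by
    intro j x hx
    have hS : Ico (0:ℝ) ε ∈ nhds x := Ico_mem_nhds hx.1 hx.2
    have hxS : x ∈ Ico (0:ℝ) ε := ⟨hx.1.le, hx.2⟩
    have hd : DifferentiableWithinAt ℝ (G j) (Ico 0 ε) x :=
      hg.differentiableOn_iteratedDerivWithin (by exact_mod_cast ENat.coe_lt_top j) hUD x hxS
    have hd' := (hd.differentiableAt hS).hasDerivAt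
    have : G (j+1) x = deriv (G j) x := by
      show iteratedDerivWithin (j+1) g (Ico 0 ε) x = deriv (iteratedDerivWithin j g (Ico 0 ε)) x
      rw [iteratedDerivWithin_succ, derivWithin_of_mem_nhds hS]
    rw [this]; exact hd'
  have hcont : ∀ j, ContinuousWithinAt (G j) (Ico 0 ε) 0 := fun j =>
    (hg.continuousOn_iteratedDerivWithin (by exact_mod_cast le_top) hUD) 0 ⟨le_refl 0, hε⟩
  set E : ℝ → ℂ := fun y => Complex.exp (Complex.I * (lam:ℂ) / (y:ℂ)) with hE
  set A : ℝ → ℂ := fun y => ((y ^ m : ℝ) : ℂ) with hA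
  have hu' : ∀ x ∈ Ioo (0:ℝ) ε, u x = E x * A x * g x := hu
  have hmn : (m:ℂ) = ((n:ℂ) - 1)/2 := by rw [hm]; push_cast; ring
  have hn : (n:ℂ) = 2*(m:ℂ)+1 := by rw [hmn]; ring
  have hEd : ∀ x ∈ Ioo (0:ℝ) ε, HasDerivAt E (E x * (-(Complex.I*lam) / (x:ℂ)^2)) x := by
    intro x hx
    have hxC : (x:ℂ) ≠ 0 := by exact_mod_cast hx.1.ne'
    have h1 : HasDerivAt (fun t : ℝ => (t:ℂ)) 1 x := by
      simpa using (hasDerivAt_id x).ofReal_comp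
    have h2 := ((hasDerivAt_const x (Complex.I * (lam:ℂ))).div h1 hxC).cexp
    refine h2.congr_deriv ?_
    simp only [Pi.div_apply, E]; ring
  have hAd : ∀ x ∈ Ioo (0:ℝ) ε, HasDerivAt A ((m:ℂ) * A x / (x:ℂ)) x := by
    intro x hx
    have h := (Real.hasDerivAt_rpow_const (p := m) (Or.inl hx.1.ne')).ofReal_comp
    convert h using 1
    have hs : x ^ (m-1) = x ^ m / x := by
      rw [Real.rpow_sub hx.1, Real.rpow_one]
    show (m:ℂ) * ((x ^ m : ℝ):ℂ) / (x:ℂ) = ((m * x ^ (m-1) : ℝ):ℂ)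
    rw [hs]
    push_cast [hx.1.ne']
    ring
  have hwd : ∀ x ∈ Ioo (0:ℝ) ε, HasDerivAt (fun y => E y * A y)
      (E x * A x * (((m:ℂ)*x - Complex.I*lam) / (x:ℂ)^2)) x := by
    intro x hx
    have hxC : (x:ℂ) ≠ 0 := by exact_mod_cast hx.1.ne'
    have h := (hEd x hx).fun_mul (hAd x hx)
    refine h.congr_deriv ?_
    field_simp
    ring
  have hgd : ∀ x ∈ Ioo (0:ℝ) ε, HasDerivAt g (G 1 x) x := by
    intro x hx
    have := hGd 0 x hx
    rwa [hG0] at this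
  have hud : ∀ x ∈ Ioo (0:ℝ) ε, HasDerivAt u
      (E x * A x * ((((m:ℂ)*x - Complex.I*lam) / (x:ℂ)^2) * g x + G 1 x)) x := by
    intro x hx
    have h := (hwd x hx).fun_mul (hgd x hx)
    have heqf : u =ᶠ[nhds x] fun y => E y * A y * g y := by
      filter_upwards [isOpen_Ioo.mem_nhds hx] with y hy
      exact hu' y hy
    have h2 := h.congr_of_eventuallyEq heqf
    refine h2.congr_deriv ?_
    ring
  have hderivu : ∀ x ∈ Ioo (0:ℝ) ε, deriv u x
      = E x * A x * ((((m:ℂ)*x - Complex.I*lam) / (x:ℂ)^2) * g x + G 1 x) :=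
    fun x hx => (hud x hx).deriv
  have key : ∀ x ∈ Ioo (0:ℝ) ε,
      (2*Complex.I*(lam:ℂ)) * G 1 x = (x:ℂ)^2 * G 2 x + 2*(x:ℂ)*G 1 x
        - ((m:ℂ)*((m:ℂ)-1)) * G 0 x := by
    intro x hx
    have hx0 : (0:ℝ) < x := hx.1
    have hxC : (x:ℂ) ≠ 0 := by exact_mod_cast hx0.ne'
    have h1 : HasDerivAt (fun t : ℝ => (t:ℂ)) 1 x := by
      simpa using (hasDerivAt_id x).ofReal_comp
    have hqd : HasDerivAt (fun y : ℝ => (((m:ℂ)*y - Complex.I*lam) / (y:ℂ)^2))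
        ((2*Complex.I*lam - (m:ℂ)*x)/(x:ℂ)^3) x := by
      have hnum : HasDerivAt (fun y : ℝ => ((m:ℂ)*(y:ℂ) - Complex.I*lam)) (m:ℂ) x := by
        simpa using (h1.const_mul (m:ℂ)).sub_const (Complex.I*lam)
      have hden : HasDerivAt (fun y : ℝ => ((y:ℂ))^2) (2*(x:ℂ)) x := by
        have h2 := h1.fun_mul h1
        simp only [pow_two]
        exact h2.congr_deriv (by ring)
      have h3 := hnum.fun_div hden (pow_ne_zero 2 hxC)
      refine h3.congr_deriv ?_
      field_simp
      ring
    have hG1d : HasDerivAt (G 1) (G 2 x) x := hGd 1 x hx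
    have hU1 := (hwd x hx).mul ((hqd.mul (hgd x hx)).add hG1d)
    have hderiv2 : deriv (deriv u) x =
        E x * A x * (((m:ℂ)*x - Complex.I*lam) / (x:ℂ)^2) *
          ((((m:ℂ)*x - Complex.I*lam) / (x:ℂ)^2) * g x + G 1 x)
        + E x * A x * ((((2*Complex.I*lam - (m:ℂ)*x)/(x:ℂ)^3) * g x
            + (((m:ℂ)*x - Complex.I*lam) / (x:ℂ)^2) * G 1 x) + G 2 x) := by
      have heqf : deriv u =ᶠ[nhds x]
          fun y => E y * A y * ((((m:ℂ)*y - Complex.I*lam) / (y:ℂ)^2) * g y + G 1 y) := by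
        filter_upwards [isOpen_Ioo.mem_nhds hx] with y hy
        exact hderivu y hy
      rw [heqf.deriv_eq]
      exact hU1.deriv
    have h := heq x hx
    rw [hderiv2, hderivu x hx, hu' x hx, hn] at h
    rw [hfact_aux (x:ℂ) (E x * A x) (g x) (G 1 x) (G 2 x) (m:ℂ) (lam:ℂ) hxC] at h
    have hEA : E x * A x ≠ 0 := by
      apply mul_ne_zero (Complex.exp_ne_zero _)
      show ((x ^ m : ℝ):ℂ) ≠ 0
      exact_mod_cast (Real.rpow_pos_of_pos hx0 m).ne'
    have hL := (mul_eq_zero.mp h).resolve_left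
      (mul_ne_zero (neg_ne_zero.mpr hEA) (pow_ne_zero 2 hxC))
    rw [hG0]
    linear_combination -hL
  have h2I : (2*Complex.I*(lam:ℂ)) ≠ 0 :=
    mul_ne_zero (mul_ne_zero two_ne_zero Complex.I_ne_zero) (Complex.ofReal_ne_zero.mpr hlam)
  have h00 : G 0 0 = 0 := by rw [hG0]; exact hg0
  exact aux_rec ε hε _ _ h2I G hcont hGd key h00
end

section
/- Let n ∈ ℕ, λ ∈ ℝ, ε > 0, and let g : [0,ε) → ℂ be continuously differentiable. Define h(x) = e^{−iλ/x} x^{(n−1)/2} g(x) for x ∈ (0,ε). Then the boundary pairing lim_{x→0⁺} x^{1−n} ( conj(h(x)) · x² h'(x) − h(x) · x² (conj∘h)'(x) ) exists and equals 2iλ |g(0)|². (This is the Green's-formula boundary computation in the proof of Lemma 6.1: for an incoming function h = x^{(n−1)/2} e^{−iλ/x} (h₀ + O(x)), the limit of the surface term h̄ x² ∂_x h − h x² ∂_x h̄, weighted by the scattering surface measure factor x^{1−n}, is 2iλ|h₀|²; combined with (H−λ²)h = 0 this forces h₀ ≡ 0.) -/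
/-!
With `W(u, u') = ū u' - u ū'`, the product rule gives `W(a u) = |a|² W(u) + |u|² W(a)`.
`W` vanishes on real functions, and the phase `e^{-iλ/x}` has `W = 2iλ/x²`.
Hence `x^{1-n} x² W(h) = 2iλ|g|² + x² W(g)` for `h = e^{-iλ/x} x^{(n-1)/2} g`, and the
last term tends to `0` because `g` is `C¹` up to the boundary.
-/

open Set Filter Topology Complex ComplexConjugate

def conjWronskian (u u' : ℂ) : ℂ := conj u * u' - u * conj u'

theorem conjWronskian_mul (a a' u u' : ℂ) :
    conjWronskian (a * u) (a' * u + a * u') =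
      normSq a * conjWronskian u u' + normSq u * conjWronskian a a' := by
  simp only [conjWronskian, map_add, map_mul, ← mul_conj]
  ring

theorem conjWronskian_ofReal (r r' : ℝ) : conjWronskian r r' = 0 := by
  simp [conjWronskian]

theorem conjWronskian_mul_right (u z : ℂ) :
    conjWronskian u (u * z) = 2 * I * z.im * normSq u := by
  have h := sub_conj z
  push_cast at h
  rw [conjWronskian, ← mul_conj, map_mul]
  linear_combination (u * conj u) * h

theorem HasDerivAt.deriv_conj {f : ℝ → ℂ} {f' : ℂ} {x : ℝ} (hf : HasDerivAt f f' x) :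
    _root_.deriv (fun t => conj (f t)) x = conj f' :=
  hf.star.deriv

theorem normSq_exp_neg_I_mul_div (lam x : ℝ) : normSq (exp (-I * lam / x)) = 1 := by
  rw [normSq_eq_norm_sq, norm_exp]
  simp

theorem hasDerivAt_exp_neg_I_mul_div (lam : ℝ) {x : ℝ} (hx : x ≠ 0) :
    HasDerivAt (fun t : ℝ => exp (-I * lam / t)) (exp (-I * lam / x) * (I * lam / x ^ 2)) x := by
  have hofReal : HasDerivAt (fun t : ℝ => (t : ℂ)) 1 x := (hasDerivAt_id x).ofReal_comp
  have hdiv : HasDerivAt (fun t : ℝ => -I * lam / t) (I * lam / x ^ 2) x :=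
    ((hasDerivAt_const x (-I * lam)).fun_div hofReal (ofReal_ne_zero.mpr hx)).congr_deriv
      (by ring)
  exact hdiv.cexp

theorem exists_hasDerivAt_incoming_conjWronskian (α lam : ℝ) {x : ℝ} (hx : 0 < x) {g : ℝ → ℂ}
    {g' : ℂ} (hg : HasDerivAt g g' x) :
    ∃ h', HasDerivAt (fun t : ℝ => exp (-I * lam / t) * ((t ^ α : ℝ) : ℂ) * g t) h' x ∧
      ((x ^ (-2 * α) : ℝ) : ℂ) *
          (x ^ 2 * conjWronskian (exp (-I * lam / x) * ((x ^ α : ℝ) : ℂ) * g x) h') =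
        2 * I * lam * normSq (g x) + x ^ 2 * conjWronskian (g x) g' := by
  have hpow := (Real.hasDerivAt_rpow_const (p := α) (Or.inl hx.ne')).ofReal_comp
  refine ⟨_, ((hasDerivAt_exp_neg_I_mul_div lam hx.ne').fun_mul hpow).fun_mul hg, ?_⟩
  have hweight : x ^ (-2 * α) * (x ^ α * x ^ α) = 1 := by
    rw [← Real.rpow_add hx, ← Real.rpow_add hx, show -2 * α + (α + α) = 0 by ring,
      Real.rpow_zero]
  rw [conjWronskian_mul, conjWronskian_mul, conjWronskian_ofReal, conjWronskian_mul_right,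
    normSq_mul, normSq_exp_neg_I_mul_div, normSq_ofReal]
  have him : (I * lam / (x : ℂ) ^ 2).im = lam / x ^ 2 := by
    rw [← ofReal_pow, div_ofReal_im]
    simp
  rw [him]
  have hxC : (x : ℂ) ≠ 0 := ofReal_ne_zero.mpr hx.ne'
  have hweightC := congrArg ((↑) : ℝ → ℂ) hweight
  push_cast at hweightC ⊢
  generalize ((x ^ (-2 * α) : ℝ) : ℂ) = w at hweightC ⊢
  field_simp
  linear_combination (2 * I * lam * normSq (g x) + x ^ 2 * conjWronskian (g x) g') * hweightC

theorem tendsto_boundary_pairing (lam : ℝ) {s : Set ℝ} {g g' : ℝ → ℂ}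
    (hg : ContinuousWithinAt g s 0) (hg' : ContinuousWithinAt g' s 0) :
    Tendsto (fun x : ℝ => 2 * I * lam * normSq (g x) + x ^ 2 * conjWronskian (g x) (g' x))
      (𝓝[s] 0) (𝓝 (2 * I * lam * normSq (g 0))) := by
  have hcont : ContinuousWithinAt
      (fun x : ℝ => 2 * I * lam * normSq (g x) + x ^ 2 * conjWronskian (g x) (g' x)) s 0 := by
    unfold conjWronskian
    fun_prop
  simpa using hcont.tendsto

/-- Green's-formula boundary pairing computation from the proof of Lemma 6.1:
for an incoming function `h(x) = e^{-iλ/x} x^{(n-1)/2} g(x)` with `g` C¹ up to the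
boundary, the limit as `x → 0⁺` of
`x^{1-n}(conj(h) x² h' - h x² (conj h)')` exists and equals `2iλ|g(0)|²`. -/
theorem stmt_3 (n : ℕ) (lam : ℝ) (ε : ℝ) (hε : 0 < ε)
    (g : ℝ → ℂ) (hg : ContDiffOn ℝ 1 g (Ico 0 ε))
    (h : ℝ → ℂ)
    (hh : ∀ x ∈ Ioo 0 ε,
      h x = Complex.exp (-Complex.I * (lam : ℂ) / (x : ℂ)) *
        ((x ^ (((n : ℝ) - 1) / 2) : ℝ) : ℂ) * g x) :
    Filter.Tendsto
      (fun x : ℝ =>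
        ((x ^ ((1 : ℝ) - (n : ℝ)) : ℝ) : ℂ) *
          ((starRingEnd ℂ) (h x) * (x : ℂ) ^ 2 * deriv h x
            - h x * (x : ℂ) ^ 2 * deriv (fun t => (starRingEnd ℂ) (h t)) x))
      (nhdsWithin 0 (Ioo 0 ε))
      (nhds (2 * Complex.I * (lam : ℂ) * ((Complex.normSq (g 0) : ℝ) : ℂ))) := by
  set g' := derivWithin g (Ico 0 ε)
  have hpair : ∀ x ∈ Ioo 0 ε,
      ((x ^ ((1 : ℝ) - (n : ℝ)) : ℝ) : ℂ) *
          (conj (h x) * (x : ℂ) ^ 2 * deriv h x - h x * (x : ℂ) ^ 2 * deriv (fun t => conj (h t)) x)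
        = 2 * I * lam * normSq (g x) + x ^ 2 * conjWronskian (g x) (g' x) := by
    intro x hx
    have hnhds : Ioo 0 ε ∈ 𝓝 x := Ioo_mem_nhds hx.1 hx.2
    have hgx : HasDerivAt g (g' x) x :=
      (hg.differentiableOn one_ne_zero x (Ioo_subset_Ico_self hx)).hasDerivWithinAt.hasDerivAt
        (mem_of_superset hnhds Ioo_subset_Ico_self)
    obtain ⟨h', hh', hW⟩ := exists_hasDerivAt_incoming_conjWronskian ((n - 1) / 2) lam hx.1 hgx
    have hderiv : HasDerivAt h h' x := hh'.congr_of_eventuallyEq (eventuallyEq_of_mem hnhds hh)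
    rw [hderiv.deriv, hderiv.deriv_conj, hh x hx, ← hW,
      show (1 : ℝ) - n = -2 * ((n - 1) / 2) by ring, conjWronskian]
    ring
  have h0 : (0 : ℝ) ∈ Ico 0 ε := ⟨le_rfl, hε⟩
  have hlim := tendsto_boundary_pairing lam (hg.continuousOn 0 h0)
    (hg.continuousOn_derivWithin (uniqueDiffOn_Ico 0 ε) le_rfl 0 h0)
  exact (hlim.mono_left (nhdsWithin_mono _ Ioo_subset_Ico_self)).congr'
    (eventually_nhdsWithin_of_forall fun x hx => (hpair x hx).symm)
end

section
/- With V_l and V_r as defined in the context, assume in addition that h is even in the fibre variable: h(y,−μ) = h(y,μ) for all y, μ ∈ ℝ^{n−1}. Let λ ∈ ℝ, λ ≠ 0, and let p = (σ, y', y'', τ', τ'', μ', μ'') be a point with σ = 1, y' = y'', μ' = −μ'', τ' = −τ'', and τ'² + h(y',μ') = λ². Then: (i) the directional derivatives along V_l(p) − V_r(p) of each of the functions σ − 1, y' − y'', μ' + μ'', τ' + τ'' all vanish at p (so V_l − V_r is tangent to the submanifold N*diag_b = {σ = 1, y' = y'', μ' = −μ'', τ' = −τ''} at p); (ii) the directional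 derivatives along V_l(p) of σ − 1 and of τ' + τ'' equal 2τ' and −h(y',μ') respectively, and these are not both zero; the same holds for V_r(p). In particular neither V_l nor V_r is tangent to N*diag_b at any point of the characteristic variety {τ'² + h(y',μ') = λ²}, while V_l − V_r is tangent there. (These are the assertions of Sections 4.2–4.3 underlying the definition of the flowout Legendrian L(λ).) -/
open Set

open ContinuousLinearMap in
lemma fderiv_even_aux {m : ℕ} (h : ((Fin m → ℝ) × (Fin m → ℝ)) → ℝ)
    (hh : Differentiable ℝ h)
    (heven : ∀ y μ : Fin m → ℝ, h (y, -μ) = h (y, μ)) (y μ v w : Fin m → ℝ) :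
    fderiv ℝ h (y, -μ) (v, w) = fderiv ℝ h (y, μ) (v, -w) := by
  set g : ((Fin m → ℝ) × (Fin m → ℝ)) →L[ℝ] ((Fin m → ℝ) × (Fin m → ℝ)) :=
    (ContinuousLinearMap.fst ℝ _ _).prod (-(ContinuousLinearMap.snd ℝ _ _)) with hgdef
  have hg : ∀ q : ((Fin m → ℝ) × (Fin m → ℝ)), g q = (q.1, -q.2) := fun q => rfl
  have hcomp : h ∘ g = h := funext fun q => heven q.1 q.2
  have key : fderiv ℝ (h ∘ g) (y, μ) = (fderiv ℝ h (g (y, μ))).comp g := by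
    rw [fderiv_comp _ (hh _) g.differentiableAt, g.fderiv]
  rw [hcomp] at key
  have h2 := congrArg (fun L : ((Fin m → ℝ) × (Fin m → ℝ)) →L[ℝ] ℝ => L (v, -w)) key
  simp only [ContinuousLinearMap.comp_apply, hg] at h2
  simp only [neg_neg] at h2
  exact h2.symm

/-- Coordinates `(σ, y', y'', τ', τ'', μ', μ'')` on the (boundary of the) b-double space. -/
abbrev Coord5 (n : ℕ) :=
  ℝ × (Fin (n-1) → ℝ) × (Fin (n-1) → ℝ) × ℝ × ℝ × (Fin (n-1) → ℝ) × (Fin (n-1) → ℝ)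

open ContinuousLinearMap in
lemma coord5_deriv1 (n : ℕ) (p v : Coord5 n) :
    fderiv ℝ (fun q : Coord5 n => q.1 - 1) p v = v.1 := by
  have H : HasFDerivAt (fun q : Coord5 n => q.1 - 1)
      (ContinuousLinearMap.fst ℝ ℝ _) p := hasFDerivAt_fst.sub_const 1
  rw [H.fderiv]; rfl

open ContinuousLinearMap in
lemma coord5_deriv2 (n : ℕ) (p v : Coord5 n) :
    fderiv ℝ (fun q : Coord5 n => q.2.1 - q.2.2.1) p v = v.2.1 - v.2.2.1 := by
  have hA : HasFDerivAt (fun q : Coord5 n => q.2.1)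
      ((fst ℝ _ _).comp (snd ℝ _ _)) p := hasFDerivAt_fst.comp p hasFDerivAt_snd
  have hB : HasFDerivAt (fun q : Coord5 n => q.2.2.1)
      ((fst ℝ _ _).comp ((snd ℝ _ _).comp (snd ℝ _ _))) p :=
    hasFDerivAt_fst.comp p (hasFDerivAt_snd.comp p hasFDerivAt_snd)
  rw [HasFDerivAt.fderiv (f := fun q : Coord5 n => q.2.1 - q.2.2.1) (hA.sub hB)]; rfl

open ContinuousLinearMap in
lemma coord5_deriv4 (n : ℕ) (p v : Coord5 n) :
    fderiv ℝ (fun q : Coord5 n => q.2.2.2.1 + q.2.2.2.2.1) p v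
      = v.2.2.2.1 + v.2.2.2.2.1 := by
  have hA : HasFDerivAt (fun q : Coord5 n => q.2.2.2.1)
      ((fst ℝ _ _).comp ((snd ℝ _ _).comp ((snd ℝ _ _).comp (snd ℝ _ _)))) p :=
    hasFDerivAt_fst.comp p (hasFDerivAt_snd.comp p (hasFDerivAt_snd.comp p hasFDerivAt_snd))
  have hB : HasFDerivAt (fun q : Coord5 n => q.2.2.2.2.1)
      ((fst ℝ _ _).comp ((snd ℝ _ _).comp ((snd ℝ _ _).comp ((snd ℝ _ _).comp (snd ℝ _ _))))) p :=
    hasFDerivAt_fst.comp p (hasFDerivAt_snd.comp p (hasFDerivAt_snd.comp p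
      (hasFDerivAt_snd.comp p hasFDerivAt_snd)))
  rw [HasFDerivAt.fderiv (f := fun q : Coord5 n => q.2.2.2.1 + q.2.2.2.2.1) (hA.add hB)]; rfl

open ContinuousLinearMap in
lemma coord5_deriv6 (n : ℕ) (p v : Coord5 n) :
    fderiv ℝ (fun q : Coord5 n => q.2.2.2.2.2.1 + q.2.2.2.2.2.2) p v
      = v.2.2.2.2.2.1 + v.2.2.2.2.2.2 := by
  have hA : HasFDerivAt (fun q : Coord5 n => q.2.2.2.2.2.1)
      ((fst ℝ _ _).comp ((snd ℝ _ _).comp ((snd ℝ _ _).comp ((snd ℝ _ _).comp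
        ((snd ℝ _ _).comp (snd ℝ _ _)))))) p :=
    hasFDerivAt_fst.comp p (hasFDerivAt_snd.comp p (hasFDerivAt_snd.comp p
      (hasFDerivAt_snd.comp p (hasFDerivAt_snd.comp p hasFDerivAt_snd))))
  have hB : HasFDerivAt (fun q : Coord5 n => q.2.2.2.2.2.2)
      ((snd ℝ _ _).comp ((snd ℝ _ _).comp ((snd ℝ _ _).comp ((snd ℝ _ _).comp
        ((snd ℝ _ _).comp (snd ℝ _ _)))))) p :=
    hasFDerivAt_snd.comp p (hasFDerivAt_snd.comp p (hasFDerivAt_snd.comp p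
      (hasFDerivAt_snd.comp p (hasFDerivAt_snd.comp p hasFDerivAt_snd))))
  rw [HasFDerivAt.fderiv (f := fun q : Coord5 n => q.2.2.2.2.2.1 + q.2.2.2.2.2.2) (hA.add hB)]; rfl

/-- Sections 4.2–4.3: at a point `p` of `N*diag_b ∩ Σ(H_l - λ²)` (so `σ = 1`,
`y' = y''`, `μ' = -μ''`, `τ' = -τ''`, `τ'² + h(y',μ') = λ²`), the difference
`V_l - V_r` is tangent to `N*diag_b` (the directional derivatives of the defining
functions `σ-1`, `y'-y''`, `μ'+μ''`, `τ'+τ''` along it vanish), while neither `V_l`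
nor `V_r` is tangent there: each differentiates `σ-1` to `2τ'` and `τ'+τ''` to
`-h(y',μ')`, which are not both zero. -/
theorem stmt_5 (n : ℕ) (hn : 2 ≤ n)
    (h : ((Fin (n-1) → ℝ) × (Fin (n-1) → ℝ)) → ℝ) (hh : ContDiff ℝ (⊤ : ℕ∞) h)
    (heven : ∀ y μ : Fin (n-1) → ℝ, h (y, -μ) = h (y, μ))
    (Vl Vr : Coord5 n → Coord5 n)
    (hVl : ∀ p : Coord5 n, Vl p =
      (2 * p.2.2.2.1 * p.1,
       fun i => fderiv ℝ h (p.2.1, p.2.2.2.2.2.1) (0, Pi.single i 1),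
       0,
       -h (p.2.1, p.2.2.2.2.2.1),
       0,
       fun i => 2 * p.2.2.2.1 * p.2.2.2.2.2.1 i
         - fderiv ℝ h (p.2.1, p.2.2.2.2.2.1) (Pi.single i 1, 0),
       0))
    (hVr : ∀ p : Coord5 n, Vr p =
      (-2 * p.2.2.2.2.1 * p.1,
       0,
       fun i => fderiv ℝ h (p.2.2.1, p.2.2.2.2.2.2) (0, Pi.single i 1),
       0,
       -h (p.2.2.1, p.2.2.2.2.2.2),
       0,
       fun i => 2 * p.2.2.2.2.1 * p.2.2.2.2.2.2 i
         - fderiv ℝ h (p.2.2.1, p.2.2.2.2.2.2) (Pi.single i 1, 0)))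
    (lam : ℝ) (hlam : lam ≠ 0)
    (p : Coord5 n)
    (hσ : p.1 = 1) (hy : p.2.1 = p.2.2.1)
    (hμ : p.2.2.2.2.2.1 = -p.2.2.2.2.2.2)
    (hτ : p.2.2.2.1 = -p.2.2.2.2.1)
    (hchar : p.2.2.2.1 ^ 2 + h (p.2.1, p.2.2.2.2.2.1) = lam ^ 2) :
    ((fderiv ℝ (fun q : Coord5 n => q.1 - 1) p) (Vl p - Vr p) = 0 ∧
     (fderiv ℝ (fun q : Coord5 n => q.2.1 - q.2.2.1) p) (Vl p - Vr p) = 0 ∧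
     (fderiv ℝ (fun q : Coord5 n => q.2.2.2.2.2.1 + q.2.2.2.2.2.2) p) (Vl p - Vr p) = 0 ∧
     (fderiv ℝ (fun q : Coord5 n => q.2.2.2.1 + q.2.2.2.2.1) p) (Vl p - Vr p) = 0) ∧
    ((fderiv ℝ (fun q : Coord5 n => q.1 - 1) p) (Vl p) = 2 * p.2.2.2.1 ∧
     (fderiv ℝ (fun q : Coord5 n => q.2.2.2.1 + q.2.2.2.2.1) p) (Vl p)
        = -h (p.2.1, p.2.2.2.2.2.1) ∧
     (fderiv ℝ (fun q : Coord5 n => q.1 - 1) p) (Vr p) = 2 * p.2.2.2.1 ∧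
     (fderiv ℝ (fun q : Coord5 n => q.2.2.2.1 + q.2.2.2.2.1) p) (Vr p)
        = -h (p.2.1, p.2.2.2.2.2.1) ∧
     (2 * p.2.2.2.1 ≠ 0 ∨ h (p.2.1, p.2.2.2.2.2.1) ≠ 0)) := by
  have hdiff : Differentiable ℝ h := hh.differentiable (by simp)
  have heder : ∀ (y μ v w : Fin (n-1) → ℝ),
      fderiv ℝ h (y, -μ) (v, w) = fderiv ℝ h (y, μ) (v, -w) :=
    fderiv_even_aux h hdiff heven
  obtain ⟨σ, y1, y2, t1, t2, m1, m2⟩ := p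
  simp only [] at hσ hy hμ hτ hchar ⊢
  subst hσ hy hμ hτ
  simp only [coord5_deriv1, coord5_deriv2, coord5_deriv4, coord5_deriv6,
    hVl, hVr, Prod.fst_sub, Prod.snd_sub]
  refine ⟨⟨by ring, ?_, ?_, ?_⟩, by ring, by ring, by ring, ?_, ?_⟩
  · funext i
    simp only [Pi.sub_apply, Pi.zero_apply, Pi.add_apply]
    rw [heder y1 m2 0 (Pi.single i 1)]
    have e : ((0, -Pi.single i 1) : (Fin (n-1) → ℝ) × (Fin (n-1) → ℝ))
        = -(0, Pi.single i 1) := by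
      rw [Prod.neg_mk, neg_zero]
    rw [e, map_neg]
    ring
  · funext i
    simp only [Pi.sub_apply, Pi.zero_apply, Pi.add_apply, Pi.neg_apply]
    rw [heder y1 m2 (Pi.single i 1) 0]
    simp only [neg_zero]
    ring
  · rw [heven y1 m2]
    ring
  · rw [heven y1 m2]
    ring
  · by_contra hc
    push_neg at hc
    obtain ⟨h1, h2⟩ := hc
    have ht : t2 = 0 := by linarith
    apply hlam
    have : lam ^ 2 = 0 := by rw [← hchar, ht, h2]; ring
    exact pow_eq_zero_iff (two_ne_zero) |>.mp this
end

section
/- Let k ∈ ℕ and let b : (0,∞) → ℂ be smooth. Assume: (i) there is a smooth function c : [0,1) → ℂ with b(σ) = σ^{1/2−k} c(σ) for all 0 < σ < 1; and (ii) b is rapidly decreasing at infinity, i.e. for every N ∈ ℕ, sup_{σ ≥ 1} σ^N |b(σ)| < ∞. Then there exists a unique differentiable function a : (0,∞) → ℂ satisfying σ a'(σ) + (k + 1/2) a(σ) = b(σ) for all σ > 0 and which is rapidly decreasing at infinity (for every N, sup_{σ ≥ 1} σ^N |a(σ)| < ∞); moreover this a is smooth, and σ ↦ σ^{k+1/2}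 a(σ) extends to a smooth function on [0,∞). (This is the solvability of the transport equations (σ ∂_σ + 1/2 + k) a_k = b_k at the outgoing face in Section 4.5: there is a unique solution rapidly decreasing at the right boundary, with the stated conormal behaviour at the left boundary.) -/
open Set Filter MeasureTheory
open scoped Topology NNReal ENNReal ContDiff

section Helpers

lemma rpow_analytic (w : ℝ) : AnalyticOnNhd ℝ (fun x : ℝ => ((x ^ w : ℝ) : ℂ)) (Ioi 0) := by
  intro x hx
  have h1 : AnalyticAt ℂ (fun z : ℂ => z ^ (w:ℂ)) (x:ℂ) :=
    analyticAt_id.cpow analyticAt_const (Complex.ofReal_mem_slitPlane.2 hx)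
  have h2 : AnalyticAt ℝ (fun t : ℝ => ((t:ℂ) ^ (w:ℂ))) x :=
    h1.restrictScalars.comp (Complex.ofRealCLM.analyticAt x)
  refine h2.congr ?_
  filter_upwards [Ioi_mem_nhds hx] with t ht
  exact (Complex.ofReal_cpow ht.le w).symm

theorem primitive_contDiffOn {s : Set ℝ} (hs : UniqueDiffOn ℝ s) {g A : ℝ → ℂ}
    (hg : ContDiffOn ℝ ∞ g s) (hA : ∀ x ∈ s, HasDerivWithinAt A (g x) s x) :
    ContDiffOn ℝ ∞ A s :=
  (contDiffOn_infty_iff_derivWithin hs).2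
    ⟨fun x hx => (hA x hx).differentiableWithinAt,
      hg.congr (fun x hx => (hA x hx).derivWithin (hs x hx))⟩

end Helpers



/-- Solvability of the transport equations `(σ∂_σ + 1/2 + k) a = b` at the outgoing
face (Section 4.5): if `b` is smooth on `(0,∞)`, of the form `σ^{1/2-k}` times a
function smooth on `[0,1)`, and rapidly decreasing at infinity, then there is a unique
differentiable solution `a` on `(0,∞)` rapidly decreasing at infinity; moreover this
solution is smooth and `σ^{k+1/2} a(σ)` extends smoothly to `[0,∞)`. -/
theorem stmt_7 (k : ℕ) (b : ℝ → ℂ) (hb : ContDiffOn ℝ (⊤ : ℕ∞) b (Ioi 0))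
    (c : ℝ → ℂ) (hc : ContDiffOn ℝ (⊤ : ℕ∞) c (Ico 0 1))
    (hbc : ∀ σ ∈ Ioo (0 : ℝ) 1, b σ = ((σ ^ ((1 : ℝ) / 2 - (k : ℝ)) : ℝ) : ℂ) * c σ)
    (hbdecay : ∀ N : ℕ, ∃ C : ℝ, ∀ σ : ℝ, 1 ≤ σ → σ ^ N * ‖b σ‖ ≤ C) :
    ∃ a : ℝ → ℂ,
      ((∀ σ ∈ Ioi (0 : ℝ), DifferentiableAt ℝ a σ) ∧
       (∀ σ ∈ Ioi (0 : ℝ), (σ : ℂ) * deriv a σ + ((k : ℂ) + 1 / 2) * a σ = b σ) ∧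
       (∀ N : ℕ, ∃ C : ℝ, ∀ σ : ℝ, 1 ≤ σ → σ ^ N * ‖a σ‖ ≤ C)) ∧
      ContDiffOn ℝ (⊤ : ℕ∞) a (Ioi 0) ∧
      (∃ A : ℝ → ℂ, ContDiffOn ℝ (⊤ : ℕ∞) A (Ici 0) ∧
        ∀ σ ∈ Ioi (0 : ℝ), A σ = ((σ ^ ((k : ℝ) + 1 / 2) : ℝ) : ℂ) * a σ) ∧
      (∀ a' : ℝ → ℂ,
        (∀ σ ∈ Ioi (0 : ℝ), DifferentiableAt ℝ a' σ) →
        (∀ σ ∈ Ioi (0 : ℝ), (σ : ℂ) * deriv a' σ + ((k : ℂ) + 1 / 2) * a' σ = b σ) →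
        (∀ N : ℕ, ∃ C : ℝ, ∀ σ : ℝ, 1 ≤ σ → σ ^ N * ‖a' σ‖ ≤ C) →
        ∀ σ ∈ Ioi (0 : ℝ), a' σ = a σ) := by
  set e : ℝ := (k:ℝ) + 1/2 with he
  have he0 : (0:ℝ) < e := by positivity
  set f : ℝ → ℂ := fun t => ((t ^ (e - 1) : ℝ) : ℂ) * b t with hf
  set g : ℝ → ℂ := fun t => if t < 1 then c t else f t with hg
  have hbA : ContDiffOn ℝ ∞ b (Ioi 0) := hb
  have hcA : ContDiffOn ℝ ∞ c (Ico 0 1) := hc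
  have hfA : ∀ x ∈ Ioi (0:ℝ), ContDiffAt ℝ ∞ f x := fun x hx =>
    ((rpow_analytic (e-1)) x hx).contDiffAt.mul (hbA.contDiffAt (Ioi_mem_nhds hx))
  have hgf : ∀ t ∈ Ioi (0:ℝ), g t = f t := by
    intro t ht
    by_cases h1 : t < 1
    · have hbct := hbc t ⟨ht, h1⟩
      have h2 : ((1:ℝ)/2 - (k:ℝ)) = 1 - e := by rw [he]; ring
      rw [h2] at hbct
      simp only [hg, hf, if_pos h1]
      rw [hbct, ← mul_assoc, ← Complex.ofReal_mul, ← Real.rpow_add ht,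
        show e - 1 + (1 - e) = 0 by ring, Real.rpow_zero]
      simp
    · simp only [hg, if_neg h1]
  have hgA : ContDiffOn ℝ ∞ g (Ici 0) := by
    intro x hx
    rcases lt_or_ge x 1 with h1 | h1
    · have h2 : ContDiffWithinAt ℝ ∞ c (Ico 0 1) x := hcA x ⟨hx, h1⟩
      have h3 : ContDiffWithinAt ℝ ∞ g (Ico 0 1) x := by
        refine h2.congr (fun t ht => ?_) ?_
        · simp only [hg, if_pos ht.2]
        · simp only [hg, if_pos h1]
      refine h3.mono_of_mem_nhdsWithin (mem_nhdsWithin.2 ⟨Iio 1, isOpen_Iio, h1,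
        fun t ht => ⟨ht.2, ht.1⟩⟩)
    · have hx0 : (0:ℝ) < x := lt_of_lt_of_le one_pos h1
      have h2 : ContDiffAt ℝ ∞ f x := hfA x hx0
      have h3 : ContDiffAt ℝ ∞ g x := by
        refine h2.congr_of_eventuallyEq ?_
        filter_upwards [Ioi_mem_nhds hx0] with t ht
        exact hgf t ht
      exact h3.contDiffWithinAt
  have hgc : ContinuousOn g (Ici 0) := hgA.continuousOn
  have hgm : AEStronglyMeasurable g (volume.restrict (Ici 0)) :=
    hgc.aestronglyMeasurable measurableSet_Ici
  have hgint : ∀ x : ℝ, 0 ≤ x → IntervalIntegrable g volume 1 x := by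
    intro x hx
    apply ContinuousOn.intervalIntegrable
    apply hgc.mono
    intro t ht
    exact le_trans (le_min zero_le_one hx) ht.1
  set F : ℝ → ℂ := fun u => ∫ t in (1:ℝ)..u, g t with hF
  set I : ℂ := ∫ t in Ioi (1:ℝ), f t with hI
  set A : ℝ → ℂ := fun u => F u - I with hA
  have hAt : ∀ x ∈ Ioi (0:ℝ), HasDerivAt A (g x) x := by
    intro x hx
    have h1 : HasDerivAt F (g x) x := by
      refine intervalIntegral.integral_hasDerivAt_right (hgint x hx.le)
        ⟨Ici 0, Ici_mem_nhds hx, hgm⟩ ((hgc x (mem_Ici.2 (le_of_lt (mem_Ioi.1 hx)))).continuousAt (Ici_mem_nhds hx))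
    exact h1.sub_const I
  have hAd : ∀ x ∈ Ici (0:ℝ), HasDerivWithinAt A (g x) (Ici 0) x := by
    intro x hx
    rcases eq_or_lt_of_le (mem_Ici.1 hx) with h0 | h0
    · have h1 : HasDerivWithinAt F (g x) (Ici 0) x := by
        subst h0
        exact intervalIntegral.integral_hasDerivWithinAt_right (hgint 0 le_rfl)
          (t := Ioi 0)
          ⟨Ici 0, mem_of_superset self_mem_nhdsWithin Ioi_subset_Ici_self, hgm⟩
          ((hgc 0 Set.self_mem_Ici).mono Ioi_subset_Ici_self)
      exact h1.sub_const I
    · exact (hAt x h0).hasDerivWithinAt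
  have hAan : ContDiffOn ℝ ∞ A (Ici 0) := primitive_contDiffOn (uniqueDiffOn_Ici 0) hgA hAd
  set a : ℝ → ℂ := fun σ => ((σ ^ (-e) : ℝ) : ℂ) * A σ with ha
  have haA : ∀ x ∈ Ioi (0:ℝ), ContDiffAt ℝ ∞ a x := fun x hx =>
    ((rpow_analytic (-e)) x hx).contDiffAt.mul (hAan.contDiffAt (Ici_mem_nhds hx))
  have hrd : ∀ σ ∈ Ioi (0:ℝ), HasDerivAt a
      (((-e * σ ^ (-e - 1) : ℝ) : ℂ) * A σ + ((σ ^ (-e) : ℝ) : ℂ) * g σ) σ := by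
    intro σ hσ
    have h1 : HasDerivAt (fun x : ℝ => ((x ^ (-e) : ℝ) : ℂ)) ((-e * σ ^ (-e - 1) : ℝ) : ℂ) σ :=
      (Real.hasDerivAt_rpow_const (Or.inl (ne_of_gt hσ))).ofReal_comp
    exact h1.mul (hAt σ hσ)
  have hODE : ∀ σ ∈ Ioi (0:ℝ), (σ:ℂ) * deriv a σ + ((k:ℂ) + 1/2) * a σ = b σ := by
    intro σ hσ
    have hσ0 : (0:ℝ) < σ := hσ
    rw [(hrd σ hσ).deriv, hgf σ hσ]
    have c1 : (σ:ℂ) * ((σ ^ (-e - 1) : ℝ) : ℂ) = ((σ ^ (-e) : ℝ) : ℂ) := by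
      rw [← Complex.ofReal_mul]
      congr 1
      rw [show σ * σ ^ (-e-1) = σ ^ (1:ℝ) * σ ^ (-e-1) by rw [Real.rpow_one],
        ← Real.rpow_add hσ0]
      norm_num
    have c2 : (σ:ℂ) * (((σ ^ (-e) : ℝ) : ℂ) * ((σ ^ (e - 1) : ℝ) : ℂ)) = 1 := by
      rw [← Complex.ofReal_mul, ← Complex.ofReal_mul]
      rw [show σ * (σ ^ (-e) * σ ^ (e-1)) = σ ^ (1:ℝ) * (σ ^ (-e) * σ ^ (e-1)) by
        rw [Real.rpow_one], ← Real.rpow_add hσ0, ← Real.rpow_add hσ0,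
        show (1:ℝ) + (-e + (e - 1)) = 0 by ring, Real.rpow_zero]
      norm_num
    have c3 : ((k:ℂ) + 1/2) = ((e:ℝ):ℂ) := by rw [he]; push_cast; ring
    rw [c3, hf]
    push_cast [Complex.ofReal_mul, Complex.ofReal_neg]
    linear_combination (-(e:ℂ) * A σ) * c1 + (b σ) * c2
  have hneg2 : ∀ N : ℕ, -((N:ℝ) + 2) < -1 := by
    intro N; have := Nat.cast_nonneg (α := ℝ) N; linarith
  have hbC : ∀ N : ℕ, ∃ C : ℝ, 0 ≤ C ∧ ∀ t : ℝ, 1 ≤ t → ‖f t‖ ≤ C * t ^ (-((N:ℝ) + 2)) := by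
    intro N
    obtain ⟨C, hC⟩ := hbdecay (k + N + 2)
    refine ⟨max C 0, le_max_right _ _, fun t ht => ?_⟩
    have ht0 : (0:ℝ) < t := lt_of_lt_of_le one_pos ht
    have h1 : ‖f t‖ = t ^ (e - 1) * ‖b t‖ := by
      rw [hf]
      rw [norm_mul, Complex.norm_real, Real.norm_eq_abs,
        abs_of_nonneg (Real.rpow_nonneg ht0.le _)]
    have h2 : t ^ (e - 1) ≤ t ^ (k:ℝ) :=
      Real.rpow_le_rpow_of_exponent_le ht (by rw [he]; linarith)
    have h3 : t ^ (k:ℝ) = t ^ (k:ℕ) := Real.rpow_natCast t k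
    have h4 : ‖f t‖ ≤ t ^ (k:ℕ) * ‖b t‖ := by
      rw [h1, ← h3]
      exact mul_le_mul_of_nonneg_right h2 (norm_nonneg _)
    have h5 : t ^ (k + N + 2) * ‖b t‖ ≤ C := hC t ht
    have hpow : (0:ℝ) < t ^ (N + 2 : ℕ) := pow_pos ht0 _
    have h6 : t ^ (-((N:ℝ) + 2)) = (t ^ (N + 2 : ℕ))⁻¹ := by
      rw [show -((N:ℝ) + 2) = -((N + 2 : ℕ) : ℝ) by push_cast; ring,
        Real.rpow_neg ht0.le, Real.rpow_natCast]
    rw [h6, ← div_eq_mul_inv, le_div_iff₀ hpow]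
    calc ‖f t‖ * t ^ (N + 2 : ℕ) ≤ (t ^ (k:ℕ) * ‖b t‖) * t ^ (N + 2 : ℕ) :=
          mul_le_mul_of_nonneg_right h4 hpow.le
      _ = t ^ (k + N + 2) * ‖b t‖ := by
          rw [show k + N + 2 = k + (N + 2) by ring, pow_add]; ring
      _ ≤ C := h5
      _ ≤ max C 0 := le_max_left _ _
  have hfc : ContinuousOn f (Ioi 0) := fun x hx => (hfA x hx).continuousAt.continuousWithinAt
  have hbint : ∀ (N : ℕ) (σ : ℝ), 0 < σ →
      IntegrableOn (fun t : ℝ => t ^ (-((N:ℝ) + 2))) (Ioi σ) volume := fun N σ hσ =>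
    integrableOn_Ioi_rpow_of_lt (hneg2 N) hσ
  have hfint : ∀ σ : ℝ, 1 ≤ σ → IntegrableOn f (Ioi σ) volume := by
    intro σ hσ
    have hσ0 : (0:ℝ) < σ := lt_of_lt_of_le one_pos hσ
    obtain ⟨C, hC0, hC⟩ := hbC 0
    refine Integrable.mono' ((hbint 0 σ hσ0).const_mul C)
      ((hfc.mono (Ioi_subset_Ioi hσ0.le)).aestronglyMeasurable measurableSet_Ioi) ?_
    · filter_upwards [ae_restrict_mem measurableSet_Ioi] with t ht
      exact hC t (le_trans hσ (le_of_lt ht))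
  have hAeq : ∀ σ : ℝ, 1 ≤ σ → A σ = -∫ t in Ioi σ, f t := by
    intro σ hσ
    have hσ0 : (0:ℝ) < σ := lt_of_lt_of_le one_pos hσ
    have hfi1 : IntegrableOn f (Ioi 1) volume := hfint 1 le_rfl
    have hfiσ : IntegrableOn f (Ioi σ) volume := hfi1.mono_set (Ioi_subset_Ioi hσ)
    have hfio : IntegrableOn f (Ioc 1 σ) volume := hfi1.mono_set Ioc_subset_Ioi_self
    have hsplit : ∫ t in Ioi (1:ℝ), f t = (∫ t in Ioc 1 σ, f t) + ∫ t in Ioi σ, f t := by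
      rw [← setIntegral_union (Ioc_disjoint_Ioi le_rfl) measurableSet_Ioi hfio hfiσ,
        Ioc_union_Ioi_eq_Ioi hσ]
    have hFσ : F σ = ∫ t in Ioc 1 σ, f t := by
      show (∫ t in (1:ℝ)..σ, g t) = ∫ t in Ioc 1 σ, f t
      rw [intervalIntegral.integral_of_le hσ]
      refine setIntegral_congr_fun measurableSet_Ioc fun t ht => ?_
      exact hgf t (lt_trans one_pos ht.1)
    rw [hA]
    simp only
    rw [hFσ, hI, hsplit]
    ring
  have hAbd : ∀ N : ℕ, ∃ C : ℝ, 0 ≤ C ∧ ∀ σ : ℝ, 1 ≤ σ → ‖A σ‖ ≤ C * σ ^ (-(N:ℝ)) := by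
    intro N
    obtain ⟨C, hC0, hC⟩ := hbC N
    refine ⟨C, hC0, fun σ hσ => ?_⟩
    have hσ0 : (0:ℝ) < σ := lt_of_lt_of_le one_pos hσ
    rw [hAeq σ hσ, norm_neg]
    have h1 : ‖∫ t in Ioi σ, f t‖ ≤ ∫ t in Ioi σ, C * t ^ (-((N:ℝ)+2)) := by
      refine norm_integral_le_of_norm_le ((hbint N σ hσ0).const_mul C) ?_
      filter_upwards [ae_restrict_mem measurableSet_Ioi] with t ht
      exact hC t (le_trans hσ (le_of_lt ht))
    have h2 : ∫ t in Ioi σ, C * t ^ (-((N:ℝ)+2)) = C * (σ ^ (-((N:ℝ)+1)) / ((N:ℝ)+1)) := by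
      rw [integral_const_mul, integral_Ioi_rpow_of_lt (hneg2 N) hσ0,
        show -((N:ℝ)+2) + 1 = -((N:ℝ)+1) by ring]
      rw [neg_div, ← div_neg, neg_neg]
    have h3 : σ ^ (-((N:ℝ)+1)) / ((N:ℝ)+1) ≤ σ ^ (-(N:ℝ)) := by
      have hh1 : σ ^ (-((N:ℝ)+1)) ≤ σ ^ (-(N:ℝ)) :=
        Real.rpow_le_rpow_of_exponent_le hσ (by linarith)
      have hh2 : σ ^ (-((N:ℝ)+1)) / ((N:ℝ)+1) ≤ σ ^ (-((N:ℝ)+1)) :=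
        div_le_self (Real.rpow_nonneg hσ0.le _)
          (by linarith [Nat.cast_nonneg (α := ℝ) N])
      linarith
    calc ‖∫ t in Ioi σ, f t‖ ≤ C * (σ ^ (-((N:ℝ)+1)) / ((N:ℝ)+1)) := h2 ▸ h1
      _ ≤ C * σ ^ (-(N:ℝ)) := mul_le_mul_of_nonneg_left h3 hC0
  have hadecay : ∀ N : ℕ, ∃ C : ℝ, ∀ σ : ℝ, 1 ≤ σ → σ ^ N * ‖a σ‖ ≤ C := by
    intro N
    obtain ⟨C, hC0, hC⟩ := hAbd N
    refine ⟨C, fun σ hσ => ?_⟩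
    have hσ0 : (0:ℝ) < σ := lt_of_lt_of_le one_pos hσ
    have h1 : ‖a σ‖ = σ ^ (-e) * ‖A σ‖ := by
      rw [ha]
      simp only
      rw [norm_mul, Complex.norm_real, Real.norm_eq_abs,
        abs_of_nonneg (Real.rpow_nonneg hσ0.le _)]
    have h2 : (σ:ℝ) ^ (N:ℕ) = σ ^ ((N:ℝ)) := (Real.rpow_natCast σ N).symm
    calc σ ^ (N:ℕ) * ‖a σ‖ = σ ^ ((N:ℝ)) * (σ ^ (-e) * ‖A σ‖) := by rw [h1, h2]
      _ ≤ σ ^ ((N:ℝ)) * (σ ^ (-e) * (C * σ ^ (-(N:ℝ)))) := by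
          refine mul_le_mul_of_nonneg_left
            (mul_le_mul_of_nonneg_left (hC σ hσ) (Real.rpow_nonneg hσ0.le _))
            (Real.rpow_nonneg hσ0.le _)
      _ = C * (σ ^ ((N:ℝ)) * σ ^ (-(N:ℝ)) * σ ^ (-e)) := by ring
      _ = C * σ ^ (-e) := by
          rw [← Real.rpow_add hσ0, show (N:ℝ) + -(N:ℝ) = 0 by ring, Real.rpow_zero, one_mul]
      _ ≤ C * 1 := mul_le_mul_of_nonneg_left
          (Real.rpow_le_one_of_one_le_of_nonpos hσ (by linarith)) hC0
      _ = C := mul_one C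
  -- uniqueness
  have huniq : ∀ a' : ℝ → ℂ,
      (∀ σ ∈ Ioi (0 : ℝ), DifferentiableAt ℝ a' σ) →
      (∀ σ ∈ Ioi (0 : ℝ), (σ : ℂ) * deriv a' σ + ((k : ℂ) + 1 / 2) * a' σ = b σ) →
      (∀ N : ℕ, ∃ C : ℝ, ∀ σ : ℝ, 1 ≤ σ → σ ^ N * ‖a' σ‖ ≤ C) →
      ∀ σ ∈ Ioi (0 : ℝ), a' σ = a σ := by
    intro a' hd' hode' hdec'
    set D : ℝ → ℂ := fun σ => a' σ - a σ with hD
    set Φ : ℝ → ℂ := fun σ => ((σ ^ e : ℝ) : ℂ) * D σ with hΦ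
    have hΦd : ∀ σ ∈ Ioi (0:ℝ), HasDerivAt Φ 0 σ := by
      intro σ hσ
      have hσ0 : (0:ℝ) < σ := hσ
      have h1 : HasDerivAt (fun x : ℝ => ((x ^ e : ℝ) : ℂ)) ((e * σ ^ (e-1) : ℝ) : ℂ) σ :=
        (Real.hasDerivAt_rpow_const (Or.inl hσ0.ne')).ofReal_comp
      have h2 : HasDerivAt a' (deriv a' σ) σ := (hd' σ hσ).hasDerivAt
      have h3 : HasDerivAt a (deriv a σ) σ := ((haA σ hσ).differentiableAt (by simp)).hasDerivAt
      have h4 : HasDerivAt D (deriv a' σ - deriv a σ) σ := h2.sub h3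
      have h5 := h1.mul h4
      have hσne : (σ:ℂ) ≠ 0 := by
        simpa using (Complex.ofReal_ne_zero.2 hσ0.ne')
      have hodiff : (σ:ℂ) * (deriv a' σ - deriv a σ) = -((k:ℂ)+1/2) * D σ := by
        have o1 := hode' σ hσ
        have o2 := hODE σ hσ
        rw [hD]
        simp only
        linear_combination o1 - o2
      have c1 : (σ:ℂ) * ((σ ^ (e - 1) : ℝ) : ℂ) = ((σ ^ e : ℝ) : ℂ) := by
        rw [← Complex.ofReal_mul]
        congr 1
        rw [show σ * σ ^ (e-1) = σ ^ (1:ℝ) * σ ^ (e-1) by rw [Real.rpow_one],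
          ← Real.rpow_add hσ0]
        norm_num
      have c3 : ((k:ℂ) + 1/2) = ((e:ℝ):ℂ) := by rw [he]; push_cast; ring
      have hz : ((e * σ ^ (e-1) : ℝ) : ℂ) * D σ + ((σ ^ e : ℝ) : ℂ) * (deriv a' σ - deriv a σ)
          = 0 := by
        apply mul_left_cancel₀ hσne
        rw [mul_zero]
        rw [c3] at hodiff
        push_cast [Complex.ofReal_mul]
        linear_combination ((e:ℝ):ℂ) * (D σ) * c1 + ((σ ^ e : ℝ):ℂ) * hodiff
      rwa [hz] at h5
    have hkey : ∀ u v : ℝ, 0 < u → u ≤ v → Φ v = Φ u := by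
      intro u v hu huv
      have hdiff : DifferentiableOn ℝ Φ (Icc u v) := fun t ht =>
        ((hΦd t (lt_of_lt_of_le hu ht.1)).differentiableAt).differentiableWithinAt
      have hder : ∀ t ∈ Ico u v, derivWithin Φ (Icc u v) t = 0 := by
        intro t ht
        have huv' : u < v := lt_of_le_of_lt ht.1 ht.2
        exact ((hΦd t (lt_of_lt_of_le hu ht.1)).hasDerivWithinAt).derivWithin
          (uniqueDiffOn_Icc huv' t (mem_Icc_of_Ico ht))
      exact constant_of_derivWithin_zero hdiff hder v (right_mem_Icc.2 huv)
    have hΦconst : ∀ σ ∈ Ioi (0:ℝ), Φ σ = Φ 1 := by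
      intro σ hσ
      rcases le_total σ 1 with h | h
      · exact (hkey σ 1 hσ h).symm
      · exact hkey 1 σ one_pos h
    obtain ⟨C1, hC1⟩ := hdec' (k+1)
    obtain ⟨C2, hC2⟩ := hadecay (k+1)
    have hbound : ∀ σ : ℝ, 1 ≤ σ → ‖Φ 1‖ ≤ (C1 + C2) * σ ^ (-(1:ℝ)/2) := by
      intro σ hσ
      have hσ0 : (0:ℝ) < σ := lt_of_lt_of_le one_pos hσ
      rw [← hΦconst σ hσ0]
      have h1 : ‖Φ σ‖ = σ ^ e * ‖D σ‖ := by
        rw [hΦ]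
        simp only
        rw [norm_mul, Complex.norm_real, Real.norm_eq_abs,
          abs_of_nonneg (Real.rpow_nonneg hσ0.le _)]
      have hp : (0:ℝ) < σ ^ (k+1 : ℕ) := pow_pos hσ0 _
      have h3 : ‖a' σ‖ ≤ C1 / σ ^ (k+1 : ℕ) := by
        rw [le_div_iff₀ hp]
        have := hC1 σ hσ; linarith [hC1 σ hσ]
      have h4 : ‖a σ‖ ≤ C2 / σ ^ (k+1 : ℕ) := by
        rw [le_div_iff₀ hp]
        linarith [hC2 σ hσ]
      have h5 : ‖D σ‖ ≤ (C1 + C2) / σ ^ (k+1 : ℕ) := by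
        calc ‖D σ‖ ≤ ‖a' σ‖ + ‖a σ‖ := norm_sub_le _ _
          _ ≤ C1 / σ ^ (k+1 : ℕ) + C2 / σ ^ (k+1 : ℕ) := add_le_add h3 h4
          _ = (C1 + C2) / σ ^ (k+1 : ℕ) := by ring
      have h6 : σ ^ (k+1:ℕ) = σ ^ ((k:ℝ) + 1) := by
        rw [← Real.rpow_natCast σ (k+1)]; push_cast; ring_nf
      calc ‖Φ σ‖ = σ ^ e * ‖D σ‖ := h1
        _ ≤ σ ^ e * ((C1 + C2) / σ ^ (k+1 : ℕ)) :=
            mul_le_mul_of_nonneg_left h5 (Real.rpow_nonneg hσ0.le _)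
        _ = (C1 + C2) * (σ ^ e / σ ^ ((k:ℝ) + 1)) := by rw [h6]; ring
        _ = (C1 + C2) * σ ^ (-(1:ℝ)/2) := by
            rw [← Real.rpow_sub hσ0, show e - ((k:ℝ)+1) = -(1:ℝ)/2 by rw [he]; ring]
    have hΦ10 : Φ 1 = 0 := by
      have ht : Tendsto (fun σ : ℝ => (C1 + C2) * σ ^ (-(1:ℝ)/2)) atTop (𝓝 0) := by
        have h0 := (tendsto_rpow_neg_atTop (y := (1:ℝ)/2) (by norm_num)).const_mul (C1 + C2)
        simpa [neg_div, mul_zero] using h0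
      have hle : ‖Φ 1‖ ≤ 0 := by
        refine ge_of_tendsto ht ?_
        filter_upwards [eventually_ge_atTop 1] with σ hσ using hbound σ hσ
      exact norm_le_zero_iff.1 hle
    intro σ hσ
    have h1 : Φ σ = 0 := by rw [hΦconst σ hσ, hΦ10]
    have h2 : ((σ ^ e : ℝ):ℂ) ≠ 0 :=
      Complex.ofReal_ne_zero.2 (Real.rpow_pos_of_pos hσ _).ne'
    have h3 : D σ = 0 := by
      rcases mul_eq_zero.1 h1 with h | h
      · exact absurd h h2
      · exact h
    have h4 : a' σ - a σ = 0 := h3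
    linear_combination h4
  -- assemble
  refine ⟨a, ⟨fun σ hσ => (haA σ hσ).differentiableAt (by simp), hODE, hadecay⟩, ?_, ⟨A, ?_, ?_⟩, huniq⟩
  · exact fun x hx => (haA x hx).contDiffWithinAt
  · exact hAan
  · intro σ hσ
    have hσ0 : (0:ℝ) < σ := hσ
    rw [ha]
    simp only
    rw [← mul_assoc, ← Complex.ofReal_mul, ← Real.rpow_add hσ0,
      show e + -e = 0 by ring, Real.rpow_zero]
    simp
end
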